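/- arXiv:1911.02786 — 10 statements merged into one kernel-verified Lean document; each statement's English description precedes it below -/
import Mathlib

section
/- Let d, n, k be positive integers and D = {0,1,…,d}. Suppose a relation R ⊆ D^n is closed under an idempotent operation f : D^k → D (applied componentwise to k tuples of R). Then for every connected component of the solution graph G(R), the vertex set of that component is closed under f: if a^1,…,a^k ∈ R all lie in the same connected component of G(R), then the tuple f(a^1,…,a^k) (defined componentwise) also lies in that component. -/
/-- The solution graph of a relation `R ⊆ D^n` (with `D = {0, …, d}` realized as
`Fin (d+1)`): vertices are the tuples in `R`, adjacent iff Hamming distance `1`. -/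
def relGraph {d n : ℕ} (R : Set (Fin n → Fin (d + 1))) : SimpleGraph {x // x ∈ R} where
  Adj u v := hammingDist u.val v.val = 1
  symm := by
    constructor
    intro u v h
    rwa [hammingDist_comm]
  loopless := by
    constructor
    intro u h
    simp [hammingDist_self] at h

theorem stmt_0 {d n k : ℕ} (hd : 0 < d) (hn : 0 < n) (hk : 0 < k)
    (R : Set (Fin n → Fin (d + 1)))
    (f : (Fin k → Fin (d + 1)) → Fin (d + 1))
    (hidem : ∀ x : Fin (d + 1), f (fun _ => x) = x)
    (hclosed : ∀ a : Fin k → (Fin n → Fin (d + 1)), (∀ i, a i ∈ R) →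
      (fun j => f (fun i => a i j)) ∈ R)
    (a : Fin k → {x // x ∈ R})
    (hconn : ∀ i i', (relGraph R).Reachable (a i) (a i')) :
    ∃ hmem : (fun j => f (fun i => (a i).val j)) ∈ R,
      ∀ i, (relGraph R).Reachable ⟨fun j => f (fun i => (a i).val j), hmem⟩ (a i) := by
  classical
  set F : (Fin k → {x // x ∈ R}) → {x // x ∈ R} :=
    fun b => ⟨fun j => f (fun i => (b i).val j), hclosed _ (fun i => (b i).2)⟩ with hF
  -- a step: replacing one coordinate by an adjacent vertex keeps F reachable
  have adjStep : ∀ (b : Fin k → {x // x ∈ R}) (i0 : Fin k) (c : {x // x ∈ R}),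
      (relGraph R).Adj (b i0) c →
      (relGraph R).Reachable (F b) (F (Function.update b i0 c)) := by
    intro b i0 c hadj
    have h1 : hammingDist (b i0).val c.val = 1 := hadj
    rw [hammingDist, Finset.card_eq_one] at h1
    obtain ⟨j0, hj0⟩ := h1
    have heq : ∀ j, j ≠ j0 → (b i0).val j = c.val j := by
      intro j hj
      by_contra hne
      have : j ∈ ({j | (b i0).val j ≠ c.val j} : Finset (Fin n)) := by
        simpa using hne
      rw [hj0, Finset.mem_singleton] at this
      exact hj this
    have hle : hammingDist (F b).val (F (Function.update b i0 c)).val ≤ 1 := by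
      rw [hammingDist]
      have hsub : ({j | (F b).val j ≠ (F (Function.update b i0 c)).val j} : Finset (Fin n))
          ⊆ {j0} := by
        intro j hj
        simp only [Finset.mem_filter, Finset.mem_univ, true_and, Finset.mem_singleton] at hj ⊢
        by_contra hne
        apply hj
        show f (fun i => (b i).val j) = f (fun i => ((Function.update b i0 c) i).val j)
        congr 1
        funext i
        by_cases hi : i = i0
        · subst hi
          rw [Function.update_self]
          exact heq j hne
        · rw [Function.update_of_ne hi]
      calc ({j | (F b).val j ≠ (F (Function.update b i0 c)).val j} : Finset (Fin n)).card
          ≤ ({j0} : Finset (Fin n)).card := Finset.card_le_card hsub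
        _ = 1 := Finset.card_singleton _
    interval_cases h : hammingDist (F b).val (F (Function.update b i0 c)).val
    · have := eq_of_hammingDist_eq_zero h
      rw [Subtype.ext this]
    · exact (SimpleGraph.Adj.reachable (by exact h : (relGraph R).Adj _ _))
  -- iterate along a reachability path in one coordinate
  have key : ∀ (b : Fin k → {x // x ∈ R}) (i0 : Fin k) (c : {x // x ∈ R}),
      (relGraph R).Reachable (b i0) c →
      (relGraph R).Reachable (F b) (F (Function.update b i0 c)) := by
    intro b i0 c h
    rw [SimpleGraph.reachable_iff_reflTransGen] at h
    induction h with
    | refl =>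
      rw [Function.update_eq_self]
    | tail _ hadj ih =>
      rename_i x y _
      have step := adjStep (Function.update b i0 x) i0 y (by
        rwa [Function.update_self])
      rw [Function.update_idem] at step
      exact ih.trans step
  -- change all coordinates to the common target
  have hall : ∀ (b c : Fin k → {x // x ∈ R}),
      (∀ i, (relGraph R).Reachable (b i) (c i)) →
      (relGraph R).Reachable (F b) (F c) := by
    intro b c hbc
    have : ∀ s : Finset (Fin k),
        (relGraph R).Reachable (F b) (F (fun i => if i ∈ s then c i else b i)) := by
      intro s
      induction s using Finset.induction_on with
      | empty => exact SimpleGraph.Reachable.rfl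
      | @insert j s hnot ih =>
        have hupd : (fun i => if i ∈ insert j s then c i else b i)
            = Function.update (fun i => if i ∈ s then c i else b i) j (c j) := by
          funext i
          by_cases hi : i = j
          · subst hi; simp [Function.update_self, hnot]
          · simp [Function.update_of_ne hi, hi]
        rw [hupd]
        have hreach : (relGraph R).Reachable ((fun i => if i ∈ s then c i else b i) j) (c j) := by
          simp only [hnot, if_neg hnot]
          exact hbc j
        exact ih.trans (key _ j (c j) hreach)
    have := this Finset.univ
    simpa using this
  -- conclude
  set i0 : Fin k := ⟨0, hk⟩
  have hcst : F (fun _ => a i0) = a i0 := by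
    apply Subtype.ext
    funext j
    exact hidem _
  have hmain : (relGraph R).Reachable (F a) (a i0) := by
    have := hall a (fun _ => a i0) (fun i => hconn i i0)
    rwa [hcst] at this
  exact ⟨(F a).2, fun i => hmain.trans (hconn i0 i)⟩
end

section
/- Let I = (A,b,d) be a Horn integer linear system. Then every connected component of the solution graph G(I) contains a unique minimal solution: a feasible solution m in that component such that m ≤ x (componentwise) for every feasible solution x in the same component. -/
/-- A feasible solution of the integer linear system `(A, b, d)`:
an integer vector with entries in `{0, …, d}` satisfying `A x ≥ b`. -/
def Feasible {m n : ℕ} (A : Matrix (Fin m) (Fin n) ℚ) (b : Fin m → ℚ) (d : ℕ)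
    (x : Fin n → ℤ) : Prop :=
  (∀ j, 0 ≤ x j ∧ x j ≤ (d : ℤ)) ∧ ∀ i, b i ≤ ∑ j, A i j * (x j : ℚ)

/-- The solution graph `G(I)` of the ILS `I = (A, b, d)`: two feasible solutions
are adjacent iff their Hamming distance is `1`.  (It is realized as a graph on the
ambient space of integer vectors; infeasible vectors are isolated vertices.) -/
def solGraph {m n : ℕ} (A : Matrix (Fin m) (Fin n) ℚ) (b : Fin m → ℚ) (d : ℕ) :
    SimpleGraph (Fin n → ℤ) where
  Adj x y := Feasible A b d x ∧ Feasible A b d y ∧ hammingDist x y = 1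
  symm := by
    constructor
    rintro x y ⟨hx, hy, hxy⟩
    exact ⟨hy, hx, by rwa [hammingDist_comm]⟩
  loopless := by
    constructor
    rintro x ⟨_, _, hxx⟩
    simp [hammingDist_self] at hxx

/-- A matrix is Horn if each row contains at most one positive entry. -/
def Horn {m n : ℕ} (A : Matrix (Fin m) (Fin n) ℚ) : Prop :=
  ∀ i, ∀ j j' : Fin n, 0 < A i j → 0 < A i j' → j = j'

lemma sum_min_ge {m n : ℕ} (A : Matrix (Fin m) (Fin n) ℚ) (i : Fin m)
    {x y : Fin n → ℤ} (h : ∀ j, 0 < A i j → x j ≤ y j) :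
    ∑ j, A i j * (x j : ℚ) ≤ ∑ j, A i j * ((min (x j) (y j) : ℤ) : ℚ) := by
  refine Finset.sum_le_sum fun j _ => ?_
  by_cases hj : 0 < A i j
  · rw [min_eq_left (h j hj)]
  · push_neg at hj
    have h1 : ((min (x j) (y j) : ℤ) : ℚ) ≤ (x j : ℚ) := by
      exact_mod_cast min_le_left (x j) (y j)
    nlinarith

lemma feas_min {m n : ℕ} {A : Matrix (Fin m) (Fin n) ℚ} {b : Fin m → ℚ} {d : ℕ}
    (hHorn : Horn A) {x y : Fin n → ℤ}
    (hx : Feasible A b d x) (hy : Feasible A b d y) :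
    Feasible A b d (fun j => min (x j) (y j)) := by
  refine ⟨fun j => ⟨le_min (hx.1 j).1 (hy.1 j).1, min_le_of_left_le (hx.1 j).2⟩, fun i => ?_⟩
  by_cases hcase : ∃ j0, 0 < A i j0 ∧ y j0 < x j0
  · obtain ⟨j0, hj0, hyx⟩ := hcase
    have key : ∀ j, 0 < A i j → y j ≤ x j := by
      intro j hj
      have := hHorn i j j0 hj hj0
      subst this
      exact hyx.le
    calc b i ≤ ∑ j, A i j * (y j : ℚ) := hy.2 i
      _ ≤ ∑ j, A i j * ((min (y j) (x j) : ℤ) : ℚ) := sum_min_ge A i key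
      _ = ∑ j, A i j * ((min (x j) (y j) : ℤ) : ℚ) := by simp_rw [min_comm]
  · push_neg at hcase
    calc b i ≤ ∑ j, A i j * (x j : ℚ) := hx.2 i
      _ ≤ ∑ j, A i j * ((min (x j) (y j) : ℤ) : ℚ) := sum_min_ge A i hcase

lemma hamming_mono {n : ℕ} (x y f g : Fin n → ℤ) (h : ∀ j, x j = y j → f j = g j) :
    hammingDist f g ≤ hammingDist x y := by
  unfold hammingDist
  apply Finset.card_le_card
  intro j hj
  simp only [Finset.mem_filter, Finset.mem_univ, true_and] at *
  exact fun hxy => hj (h j hxy)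

lemma reach_min {m n : ℕ} {A : Matrix (Fin m) (Fin n) ℚ} {b : Fin m → ℚ} {d : ℕ}
    (hHorn : Horn A) {x y : Fin n → ℤ}
    (hy : Feasible A b d y) (h : (solGraph A b d).Reachable x y) :
    (solGraph A b d).Reachable (fun j => min (x j) (y j)) x := by
  obtain ⟨w⟩ := h
  induction w with
  | @nil v =>
    have hv : (fun j => min (v j) (v j)) = v := funext fun j => min_self _
    rw [hv]
  | @cons x u y h p ih =>
    have hxf : Feasible A b d x := h.1
    have huf : Feasible A b d u := h.2.1
    have hfeq : Feasible A b d (fun j => min (x j) (y j)) := feas_min hHorn hxf hy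
    have hgeq : Feasible A b d (fun j => min (u j) (y j)) := feas_min hHorn huf hy
    have hux : (solGraph A b d).Reachable u x := (SimpleGraph.Adj.reachable h).symm
    have hgu : (solGraph A b d).Reachable (fun j => min (u j) (y j)) u := ih hy
    have hdist : hammingDist (fun j => min (x j) (y j)) (fun j => min (u j) (y j))
        ≤ hammingDist x u := by
      apply hamming_mono
      intro j hj
      simp only [hj]
    rw [h.2.2] at hdist
    by_cases heq : (fun j => min (x j) (y j)) = (fun j => min (u j) (y j))
    · rw [heq]
      exact hgu.trans hux
    · have hne : hammingDist (fun j => min (x j) (y j)) (fun j => min (u j) (y j)) ≠ 0 := by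
        intro h0
        exact heq (hammingDist_eq_zero.mp h0)
      have h1 : hammingDist (fun j => min (x j) (y j)) (fun j => min (u j) (y j)) = 1 :=
        le_antisymm hdist (Nat.one_le_iff_ne_zero.mpr hne)
      have hadj : (solGraph A b d).Adj (fun j => min (x j) (y j)) (fun j => min (u j) (y j)) :=
        ⟨hfeq, hgeq, h1⟩
      exact (hadj.reachable.trans hgu).trans hux

theorem stmt_3 {m n : ℕ} (A : Matrix (Fin m) (Fin n) ℚ) (b : Fin m → ℚ) (d : ℕ)
    (hd : 0 < d) (hHorn : Horn A)
    (s : Fin n → ℤ) (hs : Feasible A b d s) :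
    ∃! mm : Fin n → ℤ,
      Feasible A b d mm ∧ (solGraph A b d).Reachable mm s ∧
        ∀ x, Feasible A b d x → (solGraph A b d).Reachable x s → ∀ j, mm j ≤ x j := by
  classical
  set P : ℤ → Prop := fun z => ∃ x : Fin n → ℤ,
    Feasible A b d x ∧ (solGraph A b d).Reachable x s ∧ ∑ j, x j = z with hP
  have Hbdd : ∃ c : ℤ, ∀ z, P z → c ≤ z := by
    refine ⟨0, ?_⟩
    rintro z ⟨x, hxF, _, rfl⟩
    exact Finset.sum_nonneg fun j _ => (hxF.1 j).1
  have Hinh : ∃ z, P z := ⟨∑ j, s j, s, hs, SimpleGraph.Reachable.refl s, rfl⟩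
  obtain ⟨lb, ⟨mm, hmmF, hmmR, hsum⟩, hlb⟩ := Int.exists_least_of_bdd Hbdd Hinh
  have hmin : ∀ x, Feasible A b d x → (solGraph A b d).Reachable x s → ∀ j, mm j ≤ x j := by
    intro x hxF hxR
    have hmx : (solGraph A b d).Reachable mm x := hmmR.trans hxR.symm
    have hzF : Feasible A b d (fun j => min (mm j) (x j)) := feas_min hHorn hmmF hxF
    have hzR : (solGraph A b d).Reachable (fun j => min (mm j) (x j)) s :=
      (reach_min hHorn hxF hmx).trans hmmR
    have hPz : P (∑ j, min (mm j) (x j)) := ⟨_, hzF, hzR, rfl⟩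
    have h1 : lb ≤ ∑ j, min (mm j) (x j) := hlb _ hPz
    have h2 : ∑ j, min (mm j) (x j) ≤ ∑ j, mm j :=
      Finset.sum_le_sum fun j _ => min_le_left _ _
    have heqsum : ∑ j, min (mm j) (x j) = ∑ j, mm j := le_antisymm h2 (hsum ▸ h1)
    have := (Finset.sum_eq_sum_iff_of_le (fun j _ => min_le_left (mm j) (x j))).mp heqsum
    intro j
    calc mm j = min (mm j) (x j) := (this j (Finset.mem_univ j)).symm
      _ ≤ x j := min_le_right _ _
  refine ⟨mm, ⟨hmmF, hmmR, hmin⟩, ?_⟩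
  rintro y ⟨hyF, hyR, hymin⟩
  funext j
  exact le_antisymm (hymin mm hmmF hmmR j) (hmin y hyF hyR j)
end

section
/- Let I = (A,b,d) be a Horn integer linear system with n variables. Then any two feasible solutions s and t lying in the same connected component of G(I) are joined by a path in G(I) of length at most 2dn. (In particular, every connected component of G(I) has diameter at most 2dn.) -/
namespace Stmt8Aux

variable {m n : ℕ} {A : Matrix (Fin m) (Fin n) ℚ} {b : Fin m → ℚ} {d : ℕ}

def Desc : ∀ {x y : Fin n → ℤ}, (solGraph A b d).Walk x y → Prop
  | _, _, SimpleGraph.Walk.nil => True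
  | _, _, @SimpleGraph.Walk.cons _ _ x z _ _ q => z ≤ x ∧ Desc q

lemma desc_le : ∀ {x y : Fin n → ℤ} (q : (solGraph A b d).Walk x y), Desc q → y ≤ x := by
  intro x y q
  induction q with
  | nil => intro _; exact le_rfl
  | cons h q ih =>
    intro hd
    rw [Desc] at hd
    exact le_trans (ih hd.2) hd.1

lemma desc_length : ∀ {x y : Fin n → ℤ} (q : (solGraph A b d).Walk x y), Desc q →
    (q.length : ℤ) ≤ (∑ j, x j) - (∑ j, y j) := by
  intro x y q
  induction q with
  | nil => intro _; simp
  | @cons x z y h q ih =>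
    intro hd
    rw [Desc] at hd
    have hne : x ≠ z := h.ne
    obtain ⟨j, hj⟩ := Function.ne_iff.mp hne
    have hlt : (∑ j, z j) < ∑ j, x j := by
      refine Finset.sum_lt_sum (fun i _ => hd.1 i) ⟨j, Finset.mem_univ j, ?_⟩
      exact lt_of_le_of_ne (hd.1 j) (Ne.symm hj)
    have := ih hd.2
    simp only [SimpleGraph.Walk.length_cons]
    push_cast
    omega

lemma desc_concat : ∀ {x y : Fin n → ℤ} (q : (solGraph A b d).Walk x y)
    {z : Fin n → ℤ} (h : (solGraph A b d).Adj y z), Desc q → z ≤ y → Desc (q.concat h) := by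
  intro x y q
  induction q with
  | nil =>
    intro z h _ hz
    rw [SimpleGraph.Walk.concat_nil, Desc]
    exact ⟨hz, trivial⟩
  | cons h' q ih =>
    intro z h hd hz
    rw [Desc] at hd
    rw [SimpleGraph.Walk.concat_cons, Desc]
    exact ⟨hd.1, ih h hd.2 hz⟩


lemma mk_adj {x y : Fin n → ℤ} (hx : Feasible A b d x) (hy : Feasible A b d y)
    (h1 : hammingDist x y = 1) : (solGraph A b d).Adj x y := by
  show Feasible A b d x ∧ Feasible A b d y ∧ hammingDist x y = 1
  exact ⟨hx, hy, h1⟩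

lemma adj_def' {x y : Fin n → ℤ} (h : (solGraph A b d).Adj x y) :
    Feasible A b d x ∧ Feasible A b d y ∧ hammingDist x y = 1 := h

def pmin (x y : Fin n → ℤ) : Fin n → ℤ := fun j => min (x j) (y j)

lemma exists_diff {x y : Fin n → ℤ} (h : hammingDist x y = 1) :
    ∃ j, x j ≠ y j ∧ ∀ i, i ≠ j → x i = y i := by
  unfold hammingDist at h
  obtain ⟨j, hj⟩ := Finset.card_eq_one.mp h
  refine ⟨j, ?_, ?_⟩
  · have : j ∈ Finset.univ.filter fun i => x i ≠ y i := by rw [hj]; simp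
    simpa using this
  · intro i hi
    by_contra hc
    have : i ∈ Finset.univ.filter fun i => x i ≠ y i := by simp [hc]
    rw [hj] at this
    exact hi (by simpa using this)

lemma hamming_one {x y : Fin n → ℤ} (j : Fin n) (hne : x j ≠ y j)
    (hoff : ∀ i, i ≠ j → x i = y i) : hammingDist x y = 1 := by
  have : (Finset.univ.filter fun i => x i ≠ y i) = {j} := by
    ext i
    simp only [Finset.mem_filter, Finset.mem_univ, true_and, Finset.mem_singleton]
    constructor
    · intro hi; by_contra hij; exact hi (hoff i hij)
    · rintro rfl; exact hne
  simp [hammingDist, this]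

lemma feasible_pmin (hH : Horn A) {x y : Fin n → ℤ}
    (hx : Feasible A b d x) (hy : Feasible A b d y) : Feasible A b d (pmin x y) := by
  constructor
  · intro j
    exact ⟨le_min (hx.1 j).1 (hy.1 j).1, min_le_of_left_le (hx.1 j).2⟩
  · intro i
    by_cases hpos : ∃ j0, 0 < A i j0
    · obtain ⟨j0, hj0⟩ := hpos
      rcases le_total (x j0) (y j0) with hle | hle
      · refine le_trans (hx.2 i) (Finset.sum_le_sum ?_)
        intro j _
        by_cases hj : j = j0
        · subst hj; simp [pmin, min_eq_left hle]
        · have hA : A i j ≤ 0 := by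
            by_contra hc
            exact hj (hH i j j0 (lt_of_not_ge hc) hj0)
          have hm : ((pmin x y) j : ℚ) ≤ (x j : ℚ) := by
            have := min_le_left (x j) (y j)
            exact_mod_cast this
          exact mul_le_mul_of_nonpos_left hm hA
      · refine le_trans (hy.2 i) (Finset.sum_le_sum ?_)
        intro j _
        by_cases hj : j = j0
        · subst hj; simp [pmin, min_eq_right hle]
        · have hA : A i j ≤ 0 := by
            by_contra hc
            exact hj (hH i j j0 (lt_of_not_ge hc) hj0)
          have hm : ((pmin x y) j : ℚ) ≤ (y j : ℚ) := by
            have := min_le_right (x j) (y j)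
            exact_mod_cast this
          exact mul_le_mul_of_nonpos_left hm hA
    · refine le_trans (hx.2 i) (Finset.sum_le_sum ?_)
      intro j _
      have hA : A i j ≤ 0 := le_of_not_gt fun hc => hpos ⟨j, hc⟩
      have hm : ((pmin x y) j : ℚ) ≤ (x j : ℚ) := by
        have := min_le_left (x j) (y j)
        exact_mod_cast this
      exact mul_le_mul_of_nonpos_left hm hA

lemma transport (hH : Horn A) {x : Fin n → ℤ} (hx : Feasible A b d x) :
    ∀ {a c : Fin n → ℤ} (q : (solGraph A b d).Walk a c), Desc q → Feasible A b d a →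
    ∃ r : (solGraph A b d).Walk (pmin x a) (pmin x c), Desc r := by
  intro a c q
  induction q with
  | nil => intro _ _; exact ⟨SimpleGraph.Walk.nil, trivial⟩
  | @cons a z c h q ih =>
    intro hdq ha
    rw [Desc] at hdq
    obtain ⟨hza, hdq'⟩ := hdq
    have hz : Feasible A b d z := (adj_def' h).2.1
    obtain ⟨r, hr⟩ := ih hdq' hz
    obtain ⟨j, hj, hoff⟩ := exists_diff (adj_def' h).2.2
    by_cases he : pmin x a = pmin x z
    · rw [he]; exact ⟨r, hr⟩
    · have hnej : pmin x a j ≠ pmin x z j := by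
        intro hj'
        apply he
        funext i
        by_cases hij : i = j
        · subst hij; exact hj'
        · simp [pmin, hoff i hij]
      have hadj : (solGraph A b d).Adj (pmin x a) (pmin x z) := by
        refine mk_adj (feasible_pmin hH hx ha) (feasible_pmin hH hx hz) (hamming_one j hnej ?_)
        intro i hij; simp [pmin, hoff i hij]
      refine ⟨SimpleGraph.Walk.cons hadj r, ?_⟩
      rw [Desc]
      exact ⟨fun i => min_le_min le_rfl (hza i), hr⟩

lemma key (hH : Horn A) : ∀ {x y : Fin n → ℤ} (p : (solGraph A b d).Walk x y),
    Feasible A b d x → Feasible A b d y →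
    ∃ u : Fin n → ℤ, Feasible A b d u ∧
      (∃ q : (solGraph A b d).Walk x u, Desc q) ∧
      (∃ r : (solGraph A b d).Walk y u, Desc r) := by
  intro x y p
  induction p with
  | nil =>
    intro hx _
    exact ⟨_, hx, ⟨SimpleGraph.Walk.nil, trivial⟩, ⟨SimpleGraph.Walk.nil, trivial⟩⟩
  | @cons x w y h p ih =>
    intro hx hy
    have hw : Feasible A b d w := (adj_def' h).2.1
    obtain ⟨u', hu', ⟨q', hq'⟩, ⟨r', hr'⟩⟩ := ih hw hy
    obtain ⟨j, hj, hoff⟩ := exists_diff (adj_def' h).2.2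
    have hu'w : u' ≤ w := desc_le q' hq'
    have hu : Feasible A b d (pmin x u') := feasible_pmin hH hx hu'
    refine ⟨pmin x u', hu, ?_, ?_⟩
    · -- walk x → pmin x u'
      obtain ⟨r2, hr2⟩ := transport hH hx q' hq' hw
      by_cases he : pmin x w = x
      · have : ∃ q : (solGraph A b d).Walk (pmin x w) (pmin x u'), Desc q := ⟨r2, hr2⟩
        rw [he] at this
        exact this
      · have hoff' : ∀ i, i ≠ j → x i = pmin x w i := by
          intro i hij
          have : w i = x i := (hoff i hij).symm
          simp [pmin, this]
        have hnej : x j ≠ pmin x w j := by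
          intro hc
          apply he
          funext i
          by_cases hij : i = j
          · subst hij; exact hc.symm
          · exact (hoff' i hij).symm
        have hadj : (solGraph A b d).Adj x (pmin x w) :=
          mk_adj hx (feasible_pmin hH hx hw) (hamming_one j hnej hoff')
        refine ⟨SimpleGraph.Walk.cons hadj r2, ?_⟩
        rw [Desc]
        exact ⟨fun i => min_le_left _ _, hr2⟩
    · -- walk y → pmin x u'
      have hoffu : ∀ i, i ≠ j → u' i = pmin x u' i := by
        intro i hij
        have h1 : u' i ≤ x i := by rw [hoff i hij]; exact hu'w i
        simp [pmin, min_eq_right h1]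
      by_cases he : pmin x u' = u'
      · rw [he]; exact ⟨r', hr'⟩
      · have hnej : u' j ≠ pmin x u' j := by
          intro hc
          apply he
          funext i
          by_cases hij : i = j
          · subst hij; exact hc.symm
          · exact (hoffu i hij).symm
        have hadj : (solGraph A b d).Adj u' (pmin x u') :=
          mk_adj hu' hu (hamming_one j hnej hoffu)
        refine ⟨r'.concat hadj, desc_concat r' hadj hr' ?_⟩
        exact fun i => min_le_right _ _

end Stmt8Aux

theorem stmt_8 {m n : ℕ} (A : Matrix (Fin m) (Fin n) ℚ) (b : Fin m → ℚ) (d : ℕ)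
    (hd : 0 < d) (hHorn : Horn A)
    (s t : Fin n → ℤ) (hs : Feasible A b d s) (ht : Feasible A b d t)
    (hr : (solGraph A b d).Reachable s t) :
    ∃ p : (solGraph A b d).Walk s t, p.length ≤ 2 * d * n := by
  obtain ⟨p0⟩ := hr
  obtain ⟨u, hu, ⟨q, hq⟩, ⟨r, hrw⟩⟩ := Stmt8Aux.key hHorn p0 hs ht
  refine ⟨q.append r.reverse, ?_⟩
  have hq' := Stmt8Aux.desc_length q hq
  have hr' := Stmt8Aux.desc_length r hrw
  have hb : ∀ (x : Fin n → ℤ), Feasible A b d x →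
      (∑ j, x j) - (∑ j, u j) ≤ (n : ℤ) * d := by
    intro x hx
    have hsum : (∑ j, x j) - (∑ j, u j) = ∑ j, (x j - u j) := by
      rw [Finset.sum_sub_distrib]
    rw [hsum]
    calc ∑ j, (x j - u j) ≤ ∑ _j : Fin n, (d : ℤ) := by
          refine Finset.sum_le_sum fun j _ => ?_
          have h1 := (hx.1 j).2
          have h2 := (hu.1 j).1
          omega
      _ = (n : ℤ) * d := by simp [Finset.sum_const, mul_comm]
  have h1 := hb s hs
  have h2 := hb t ht
  have hlen : (q.append r.reverse).length = q.length + r.length := by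
    rw [SimpleGraph.Walk.length_append, SimpleGraph.Walk.length_reverse]
  rw [hlen]
  have hfin : ((q.length + r.length : ℕ) : ℤ) ≤ 2 * d * n := by
    push_cast
    linarith
  exact_mod_cast hfin
end

section
/- Let n ≥ 2 and d ≥ 1 be integers, and consider the integer linear system over D = {0,1,…,d} with variables x_1,…,x_n and inequalities x_j − x_{j+1} ≥ 0 and x_{j+1} − x_j ≥ −1 for j = 1,…,n−1. Both (0,0,…,0) and (d,d,…,d) are feasible, and every path in the solution graph of this system from (0,…,0) to (d,…,d) has length at least dn. -/
/-- Feasible solutions of the monotone quadratic system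
`x_j - x_{j+1} ≥ 0`, `x_{j+1} - x_j ≥ -1` (j = 1, …, n-1) over `D = {0, …, d}`. -/
def Feas9 (n d : ℕ) (x : Fin n → ℤ) : Prop :=
  (∀ j, 0 ≤ x j ∧ x j ≤ (d : ℤ)) ∧
  ∀ j : Fin n, ∀ h : (j : ℕ) + 1 < n,
    x j - x ⟨(j : ℕ) + 1, h⟩ ≥ 0 ∧ x ⟨(j : ℕ) + 1, h⟩ - x j ≥ -1

/-- The solution graph of the above system. -/
def graph9 (n d : ℕ) : SimpleGraph (Fin n → ℤ) where
  Adj x y := Feas9 n d x ∧ Feas9 n d y ∧ hammingDist x y = 1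
  symm := by
    refine ⟨?_⟩
    rintro x y ⟨hx, hy, hxy⟩
    exact ⟨hy, hx, by rwa [hammingDist_comm]⟩
  loopless := by
    refine ⟨?_⟩
    rintro x ⟨_, _, hxx⟩
    simp [hammingDist_self] at hxx

lemma step9 (n d : ℕ) (hn : 2 ≤ n) {x y : Fin n → ℤ} (h : (graph9 n d).Adj x y) :
    |(∑ j, y j) - (∑ j, x j)| ≤ 1 := by
  obtain ⟨hx, hy, hdist⟩ := h
  rw [hammingDist, Finset.card_eq_one] at hdist
  obtain ⟨i, hi⟩ := hdist
  have hne : ∀ j, j ≠ i → x j = y j := by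
    intro j hj
    by_contra hxy
    have : j ∈ ({i} : Finset (Fin n)) := by
      rw [← hi]; simp [hxy]
    simp at this; exact hj this
  have hsum : (∑ j, y j) - (∑ j, x j) = y i - x i := by
    rw [← Finset.sum_sub_distrib]
    rw [Finset.sum_eq_single i]
    · intro j _ hj
      rw [hne j hj]; ring
    · simp
  rw [hsum]
  -- now bound |y i - x i| ≤ 1 using a neighbor of i
  rw [abs_le]
  by_cases hi1 : (i : ℕ) + 1 < n
  · -- use constraint at j = i, with next coordinate i+1
    have hnx := (hx.2 i hi1)
    have hny := (hy.2 i hi1)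
    have heq : x ⟨(i : ℕ) + 1, hi1⟩ = y ⟨(i : ℕ) + 1, hi1⟩ := by
      apply hne
      intro hc
      have := congrArg Fin.val hc
      simp at this
    constructor <;> [nlinarith [hnx.1, hnx.2, hny.1, hny.2]; nlinarith [hnx.1, hnx.2, hny.1, hny.2]]
  · -- i is the last index; use constraint at j = i - 1
    have hlast : (i : ℕ) + 1 = n := le_antisymm i.2 (not_lt.mp hi1)
    have hipos : 1 ≤ (i : ℕ) := by omega
    have hjlt : (i : ℕ) - 1 < n := by omega
    set j : Fin n := ⟨(i : ℕ) - 1, hjlt⟩ with hj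
    have hj1 : (j : ℕ) + 1 < n := by simp [hj]; omega
    have hsucc : (⟨(j : ℕ) + 1, hj1⟩ : Fin n) = i := by
      apply Fin.ext; simp [hj]; omega
    have hnx := hx.2 j hj1
    have hny := hy.2 j hj1
    rw [hsucc] at hnx hny
    have heq : x j = y j := by
      apply hne
      intro hc
      have := congrArg Fin.val hc
      simp [hj] at this
      omega
    constructor <;> nlinarith [hnx.1, hnx.2, hny.1, hny.2]

lemma walk9 (n d : ℕ) (hn : 2 ≤ n) {a b : Fin n → ℤ} (p : (graph9 n d).Walk a b) :
    |(∑ j, b j) - (∑ j, a j)| ≤ (p.length : ℤ) := by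
  induction p with
  | nil => simp
  | cons h q ih =>
    rename_i u v w
    calc |(∑ j, w j) - (∑ j, u j)|
        ≤ |(∑ j, w j) - (∑ j, v j)| + |(∑ j, v j) - (∑ j, u j)| := by
          have := abs_sub_abs_le_abs_sub ((∑ j, w j)) ((∑ j, u j))
          exact abs_sub_le _ _ _
      _ ≤ (q.length : ℤ) + 1 := add_le_add ih (step9 n d hn h)
      _ = ((SimpleGraph.Walk.cons h q).length : ℤ) := by
          push_cast [SimpleGraph.Walk.length_cons]; ring

theorem stmt_9 (n d : ℕ) (hn : 2 ≤ n) (hd : 1 ≤ d) :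
    Feas9 n d (fun _ => 0) ∧ Feas9 n d (fun _ => (d : ℤ)) ∧
      ∀ p : (graph9 n d).Walk (fun _ => 0) (fun _ => (d : ℤ)), d * n ≤ p.length := by
  refine ⟨⟨fun j => ⟨le_refl 0, by positivity⟩, fun j h => by norm_num⟩,
    ⟨fun j => ⟨by positivity, le_refl _⟩, fun j h => by norm_num⟩, ?_⟩
  intro p
  have h := walk9 n d hn p
  have hsum : (∑ _j : Fin n, (d : ℤ)) - (∑ _j : Fin n, (0 : ℤ)) = (d : ℤ) * n := by
    simp [Finset.sum_const, mul_comm]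
  rw [hsum] at h
  have hpos : (0 : ℤ) ≤ (d : ℤ) * n := by positivity
  rw [abs_of_nonneg hpos] at h
  exact_mod_cast h
end

section
/- Let I = (A,b,d) be a TVPI integer linear system with n variables, and let s, t be feasible solutions such that t is reachable from s in G(I). Then there exists a path in G(I) from s to t of length at most dn. (In particular, every connected component of the solution graph of a TVPI ILS has diameter at most dn.) -/
/-- A matrix is TVPI (two-variable-per-inequality) if each row has at most two
nonzero entries. -/
def TVPI {m n : ℕ} (A : Matrix (Fin m) (Fin n) ℚ) : Prop :=
  ∀ i, (Finset.univ.filter fun j => A i j ≠ 0).card ≤ 2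

namespace Stmt10Aux

/-- The median of `a`, `b`, `x`, i.e. `x` clamped to `[min a b, max a b]`. -/
def med (a b x : ℤ) : ℤ := max (min a b) (min x (max a b))

lemma med_two_le (a b x : ℤ) :
    (a ≤ med a b x ∧ b ≤ med a b x) ∨ (a ≤ med a b x ∧ x ≤ med a b x) ∨
    (b ≤ med a b x ∧ x ≤ med a b x) := by unfold med; omega

lemma med_two_ge (a b x : ℤ) :
    (med a b x ≤ a ∧ med a b x ≤ b) ∨ (med a b x ≤ a ∧ med a b x ≤ x) ∨
    (med a b x ≤ b ∧ med a b x ≤ x) := by unfold med; omega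

/-- At least two of the three values `a, b, x` have `q·v ≤ q·med a b x`. -/
lemma mul_med_two_le (q : ℚ) (a b x : ℤ) :
    (q * (a : ℚ) ≤ q * (med a b x : ℚ) ∧ q * (b : ℚ) ≤ q * (med a b x : ℚ)) ∨
    (q * (a : ℚ) ≤ q * (med a b x : ℚ) ∧ q * (x : ℚ) ≤ q * (med a b x : ℚ)) ∨
    (q * (b : ℚ) ≤ q * (med a b x : ℚ) ∧ q * (x : ℚ) ≤ q * (med a b x : ℚ)) := by
  rcases le_total 0 q with hq | hq
  · rcases med_two_le a b x with ⟨h1, h2⟩ | ⟨h1, h2⟩ | ⟨h1, h2⟩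
    · exact Or.inl ⟨mul_le_mul_of_nonneg_left (by exact_mod_cast h1) hq,
        mul_le_mul_of_nonneg_left (by exact_mod_cast h2) hq⟩
    · exact Or.inr <| Or.inl ⟨mul_le_mul_of_nonneg_left (by exact_mod_cast h1) hq,
        mul_le_mul_of_nonneg_left (by exact_mod_cast h2) hq⟩
    · exact Or.inr <| Or.inr ⟨mul_le_mul_of_nonneg_left (by exact_mod_cast h1) hq,
        mul_le_mul_of_nonneg_left (by exact_mod_cast h2) hq⟩
  · rcases med_two_ge a b x with ⟨h1, h2⟩ | ⟨h1, h2⟩ | ⟨h1, h2⟩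
    · exact Or.inl ⟨mul_le_mul_of_nonpos_left (by exact_mod_cast h1) hq,
        mul_le_mul_of_nonpos_left (by exact_mod_cast h2) hq⟩
    · exact Or.inr <| Or.inl ⟨mul_le_mul_of_nonpos_left (by exact_mod_cast h1) hq,
        mul_le_mul_of_nonpos_left (by exact_mod_cast h2) hq⟩
    · exact Or.inr <| Or.inr ⟨mul_le_mul_of_nonpos_left (by exact_mod_cast h1) hq,
        mul_le_mul_of_nonpos_left (by exact_mod_cast h2) hq⟩

variable {m n : ℕ} {A : Matrix (Fin m) (Fin n) ℚ} {b : Fin m → ℚ} {d : ℕ}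

/-- Median-closure of the feasible region of a TVPI system. -/
lemma feasible_med (hTVPI : TVPI A) {s t x : Fin n → ℤ}
    (hs : Feasible A b d s) (ht : Feasible A b d t) (hx : Feasible A b d x) :
    Feasible A b d (fun j => med (s j) (t j) (x j)) := by
  constructor
  · intro j
    have h1 := hs.1 j
    have h2 := ht.1 j
    simp only [med]
    omega
  · intro i
    have key : ∀ z : Fin n → ℤ,
        (∑ j ∈ Finset.univ.filter (fun j => A i j ≠ 0), A i j * (z j : ℚ)) =
          ∑ j, A i j * (z j : ℚ) := by
      intro z
      apply Finset.sum_filter_of_ne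
      intro j _ h hA
      exact h (by rw [hA, zero_mul])
    have hbz : ∀ z : Fin n → ℤ, Feasible A b d z →
        b i ≤ ∑ j ∈ Finset.univ.filter (fun j => A i j ≠ 0), A i j * (z j : ℚ) := by
      intro z hz; rw [key z]; exact hz.2 i
    rw [← key]
    have hcard := hTVPI i
    have hcases : (Finset.univ.filter fun j => A i j ≠ 0).card = 0 ∨
        (Finset.univ.filter fun j => A i j ≠ 0).card = 1 ∨
        (Finset.univ.filter fun j => A i j ≠ 0).card = 2 := by omega
    rcases hcases with hc | hc | hc
    · rw [Finset.card_eq_zero] at hc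
      have := hbz s hs
      rw [hc] at this ⊢
      simpa using this
    · obtain ⟨j1, hS⟩ := Finset.card_eq_one.mp hc
      rw [hS, Finset.sum_singleton]
      have hP := mul_med_two_le (A i j1) (s j1) (t j1) (x j1)
      have hbs := hbz s hs; have hbt := hbz t ht; have hbx := hbz x hx
      rw [hS, Finset.sum_singleton] at hbs hbt hbx
      rcases hP with ⟨h1, _⟩ | ⟨h1, _⟩ | ⟨h1, _⟩
      · linarith
      · linarith
      · linarith
    · obtain ⟨j1, j2, hne, hS⟩ := Finset.card_eq_two.mp hc
      rw [hS, Finset.sum_pair hne]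
      have hP := mul_med_two_le (A i j1) (s j1) (t j1) (x j1)
      have hQ := mul_med_two_le (A i j2) (s j2) (t j2) (x j2)
      have hbs := hbz s hs; have hbt := hbz t ht; have hbx := hbz x hx
      rw [hS, Finset.sum_pair hne] at hbs hbt hbx
      have hcomb :
          (A i j1 * (s j1 : ℚ) ≤ A i j1 * (med (s j1) (t j1) (x j1) : ℚ) ∧
           A i j2 * (s j2 : ℚ) ≤ A i j2 * (med (s j2) (t j2) (x j2) : ℚ)) ∨
          (A i j1 * (t j1 : ℚ) ≤ A i j1 * (med (s j1) (t j1) (x j1) : ℚ) ∧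
           A i j2 * (t j2 : ℚ) ≤ A i j2 * (med (s j2) (t j2) (x j2) : ℚ)) ∨
          (A i j1 * (x j1 : ℚ) ≤ A i j1 * (med (s j1) (t j1) (x j1) : ℚ) ∧
           A i j2 * (x j2 : ℚ) ≤ A i j2 * (med (s j2) (t j2) (x j2) : ℚ)) := by
        tauto
      rcases hcomb with ⟨h1, h2⟩ | ⟨h1, h2⟩ | ⟨h1, h2⟩
      · linarith
      · linarith
      · linarith

/-- Clamping both endpoints can only decrease the Hamming distance. -/
lemma hamming_med_le (s t x x' : Fin n → ℤ) :
    hammingDist (fun j => med (s j) (t j) (x j)) (fun j => med (s j) (t j) (x' j)) ≤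
      hammingDist x x' := by
  apply Finset.card_le_card
  intro j hj
  simp only [Finset.mem_filter, Finset.mem_univ, true_and] at hj ⊢
  intro h
  exact hj (by rw [h])

lemma med_self_right (a b : ℤ) : med a b b = b := by unfold med; omega
lemma med_self_left (a b : ℤ) : med a b a = a := by unfold med; omega

/-- Clamping a walk: if there is a walk from `x` to `t`, the clamp of `x`
is still connected to `t`. -/
lemma clampReach (hTVPI : TVPI A) {s t : Fin n → ℤ}
    (hs : Feasible A b d s) (ht : Feasible A b d t) :
    ∀ {x w : Fin n → ℤ}, (solGraph A b d).Walk x w → w = t → Feasible A b d x →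
      (solGraph A b d).Reachable (fun j => med (s j) (t j) (x j)) t := by
  intro x w p
  induction p with
  | @nil u =>
    intro hw _
    subst hw
    have : (fun j => med (s j) (u j) (u j)) = u := funext fun j => med_self_right _ _
    rw [this]
  | @cons u v w h q ih =>
    intro hw _
    subst hw
    have hu : Feasible A b d u := h.1
    have hv : Feasible A b d v := h.2.1
    have r' := ih rfl hv
    by_cases heq : (fun j => med (s j) (w j) (u j)) = (fun j => med (s j) (w j) (v j))
    · rw [heq]; exact r'
    · refine (SimpleGraph.Adj.reachable ?_).trans r'
      refine ⟨feasible_med hTVPI hs ht hu, feasible_med hTVPI hs ht hv, ?_⟩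
      have hle : hammingDist (fun j => med (s j) (w j) (u j))
          (fun j => med (s j) (w j) (v j)) ≤ 1 := by
        calc _ ≤ hammingDist u v := hamming_med_le s w u v
        _ = 1 := h.2.2
      have hne : hammingDist (fun j => med (s j) (w j) (u j))
          (fun j => med (s j) (w j) (v j)) ≠ 0 := by
        intro h0; exact heq (hammingDist_eq_zero.mp h0)
      omega

/-- From a walk from `x` to `t` whose clamp of `x` is `s ≠ t`, find a neighbor of `s`
strictly closer (in ℓ¹) to `t`, still connected to `t`. -/
lemma firstStep (hTVPI : TVPI A) {s t : Fin n → ℤ}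
    (hs : Feasible A b d s) (ht : Feasible A b d t) (hst : s ≠ t) :
    ∀ {x w : Fin n → ℤ}, (solGraph A b d).Walk x w → w = t → Feasible A b d x →
      (fun j => med (s j) (t j) (x j)) = s →
      ∃ y : Fin n → ℤ, (solGraph A b d).Adj s y ∧ (solGraph A b d).Reachable y t ∧
        (∑ j, (y j - t j).natAbs) < ∑ j, (s j - t j).natAbs := by
  intro x w p
  induction p with
  | @nil u =>
    intro hw _ hC
    subst hw
    exfalso
    apply hst
    rw [← hC]
    exact funext fun j => med_self_right _ _
  | @cons u v w h q ih =>
    intro hw _ hC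
    subst hw
    have hu : Feasible A b d u := h.1
    have hv : Feasible A b d v := h.2.1
    by_cases heq : (fun j => med (s j) (w j) (v j)) = s
    · exact ih rfl hv heq
    · set y : Fin n → ℤ := fun j => med (s j) (w j) (v j) with hy
      have hyfeas : Feasible A b d y := feasible_med hTVPI hs ht hv
      have hham : hammingDist s y = 1 := by
        have hle : hammingDist s y ≤ 1 := by
          rw [← hC]
          calc _ ≤ hammingDist u v := hamming_med_le s w u v
          _ = 1 := h.2.2
        have hne : hammingDist s y ≠ 0 := by
          intro h0; exact heq (hammingDist_eq_zero.mp h0).symm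
        omega
      have hadj : (solGraph A b d).Adj s y := ⟨hs, hyfeas, hham⟩
      refine ⟨y, hadj, clampReach hTVPI hs ht q rfl hv, ?_⟩
      -- get the unique differing coordinate
      have hham' : (Finset.univ.filter fun j => s j ≠ y j).card = 1 := hham
      obtain ⟨j0, hj0⟩ := Finset.card_eq_one.mp hham'
      have hoff : ∀ j, j ≠ j0 → y j = s j := by
        intro j hj
        by_contra hne'
        have : j ∈ Finset.univ.filter fun j => s j ≠ y j := by
          simp only [Finset.mem_filter, Finset.mem_univ, true_and]
          exact fun hh => hne' hh.symm
        rw [hj0] at this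
        exact hj (Finset.mem_singleton.mp this)
      have hj0ne : s j0 ≠ y j0 := by
        have : j0 ∈ Finset.univ.filter fun j => s j ≠ y j := by
          rw [hj0]; exact Finset.mem_singleton_self _
        simpa using this
      have hbox : min (s j0) (w j0) ≤ y j0 ∧ y j0 ≤ max (s j0) (w j0) := by
        simp only [hy, med]; omega
      refine Finset.sum_lt_sum ?_ ⟨j0, Finset.mem_univ _, ?_⟩
      · intro j _
        by_cases hj : j = j0
        · subst hj; omega
        · rw [hoff j hj]
      · omega

/-- Main induction on the ℓ¹ distance. -/
lemma exists_walk (hTVPI : TVPI A) :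
    ∀ (k : ℕ) (s t : Fin n → ℤ), Feasible A b d s → Feasible A b d t →
      (solGraph A b d).Reachable s t → (∑ j, (s j - t j).natAbs) ≤ k →
      ∃ p : (solGraph A b d).Walk s t, p.length ≤ k := by
  intro k
  induction k with
  | zero =>
    intro s t hs ht hr hΦ
    have hst : s = t := by
      funext j
      have h0 : (∑ j, (s j - t j).natAbs) = 0 := Nat.le_zero.mp hΦ
      have := Finset.sum_eq_zero_iff.mp h0 j (Finset.mem_univ j)
      omega
    subst hst
    exact ⟨SimpleGraph.Walk.nil, le_refl _⟩
  | succ k ih =>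
    intro s t hs ht hr hΦ
    by_cases hst : s = t
    · subst hst; exact ⟨SimpleGraph.Walk.nil, by simp⟩
    · obtain ⟨p⟩ := hr
      have hCs : (fun j => med (s j) (t j) (s j)) = s := funext fun j => med_self_left _ _
      obtain ⟨y, hadj, hry, hΦy⟩ := firstStep hTVPI hs ht hst p rfl hs hCs
      obtain ⟨q, hq⟩ := ih y t hadj.2.1 ht hry (by omega)
      exact ⟨SimpleGraph.Walk.cons hadj q, by simpa using Nat.succ_le_succ hq⟩

end Stmt10Aux

theorem stmt_10 {m n : ℕ} (A : Matrix (Fin m) (Fin n) ℚ) (b : Fin m → ℚ) (d : ℕ)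
    (hd : 0 < d) (hTVPI : TVPI A)
    (s t : Fin n → ℤ) (hs : Feasible A b d s) (ht : Feasible A b d t)
    (hr : (solGraph A b d).Reachable s t) :
    ∃ p : (solGraph A b d).Walk s t, p.length ≤ d * n := by
  apply Stmt10Aux.exists_walk hTVPI (d * n) s t hs ht hr
  calc (∑ j, (s j - t j).natAbs) ≤ ∑ _j : Fin n, d := by
        apply Finset.sum_le_sum
        intro j _
        have h1 := hs.1 j
        have h2 := ht.1 j
        omega
  _ = d * n := by simp [mul_comm]
end

section
/- Let I = (A,b,d) be an integer linear system with a QH-partition (Q,H) of its variable indices, let S be the set of rows i of A with A_{ij} = 0 for all j ∈ Q, and S̄ its complement. Let I_H = (A[S,H], b_S, d) (a Horn system) and let s, t be feasible solutions of I. (1) If s_H and t_H are not connected in G(I_H), then s and t are not connected in G(I). (2) If s_H and t_H are connected in G(I_H), let x*_H be the unique minimal solution of their common component of G(I_H), and let I_Q = (A[S̄,Q], b_{S̄} − A[S̄,H]·x*_H, d); then s and t are connected in G(I) if and only if s_Q and t_Q are connected in G(I_Q). -/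
/-- `(Q, Qᶜ)` is a QH-partition of the variable indices for the matrix `A`:
(a) each row has at most two nonzero entries in columns of `Q`;
(b) each row has at most one positive entry in columns of `H = Qᶜ`;
(c) a row with a positive entry in a column of `H` has only zeros in columns of `Q`. -/
def QHPartition {m n : ℕ} (A : Matrix (Fin m) (Fin n) ℚ) (Q : Finset (Fin n)) : Prop :=
  (∀ i, (Q.filter fun j => A i j ≠ 0).card ≤ 2) ∧
  (∀ i, ((Qᶜ).filter fun j => 0 < A i j).card ≤ 1) ∧
  (∀ i, (∃ j ∈ Qᶜ, 0 < A i j) → ∀ jq ∈ Q, A i jq = 0)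

/-- Feasibility for the subsystem of `(A, c, d)` restricted to the rows in `S`
and the variables in `H` (the other variables being absent). -/
def FeasSub {m n : ℕ} (A : Matrix (Fin m) (Fin n) ℚ) (c : Fin m → ℚ) (d : ℕ)
    (S : Finset (Fin m)) (H : Finset (Fin n)) (x : {j // j ∈ H} → ℤ) : Prop :=
  (∀ j, 0 ≤ x j ∧ x j ≤ (d : ℤ)) ∧
  ∀ i ∈ S, c i ≤ ∑ j : {j // j ∈ H}, A i j.val * (x j : ℚ)

/-- The solution graph of the subsystem with rows `S` and variables `H`. -/
def subGraph {m n : ℕ} (A : Matrix (Fin m) (Fin n) ℚ) (c : Fin m → ℚ) (d : ℕ)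
    (S : Finset (Fin m)) (H : Finset (Fin n)) : SimpleGraph ({j // j ∈ H} → ℤ) where
  Adj x y := FeasSub A c d S H x ∧ FeasSub A c d S H y ∧ hammingDist x y = 1
  symm := by
    constructor
    rintro x y ⟨hx, hy, hxy⟩
    exact ⟨hy, hx, by rwa [hammingDist_comm]⟩
  loopless := by
    constructor
    rintro x ⟨_, _, hxx⟩
    simp [hammingDist_self] at hxx


lemma card_restrict {n : ℕ} (s : Finset (Fin n)) (p : Fin n → Prop) [DecidablePred p] :
    (Finset.univ.filter (fun j : {j // j ∈ s} => p j.val)).card = (s.filter p).card := by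
  apply Finset.card_bij (fun a _ => a.val)
  · intro a ha
    simp only [Finset.mem_filter, Finset.mem_univ, true_and] at ha
    exact Finset.mem_filter.mpr ⟨a.2, ha⟩
  · intro a _ b _ h; exact Subtype.ext h
  · intro b hb
    simp only [Finset.mem_filter] at hb
    exact ⟨⟨b, hb.1⟩, by simpa using hb.2, rfl⟩

lemma ham_restrict {n : ℕ} (s : Finset (Fin n)) (x y : Fin n → ℤ) :
    hammingDist (fun j : {j // j ∈ s} => x j.val) (fun j : {j // j ∈ s} => y j.val)
      = (s.filter fun j => x j ≠ y j).card := by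
  rw [hammingDist]; exact card_restrict s (fun j => x j ≠ y j)

lemma ham_split {n : ℕ} (Q : Finset (Fin n)) (x y : Fin n → ℤ) :
    hammingDist x y = (Q.filter fun j => x j ≠ y j).card
      + ((Qᶜ).filter fun j => x j ≠ y j).card := by
  rw [hammingDist, ← Finset.card_union_of_disjoint, ← Finset.filter_union,
    Finset.union_compl]
  exact Finset.disjoint_filter_filter disjoint_compl_right

lemma sum_split {n : ℕ} (Q : Finset (Fin n)) (F : Fin n → ℚ) :
    ∑ j, F j = (∑ j : {j // j ∈ Q}, F j.val) + ∑ j : {j // j ∈ Qᶜ}, F j.val := by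
  rw [Finset.sum_coe_sort, Finset.sum_coe_sort, Finset.sum_add_sum_compl]

lemma reach_map {V W : Type*} (G : SimpleGraph V) (G' : SimpleGraph W) (f : V → W)
    (P : V → Prop) (hPadj : ∀ u v, G.Adj u v → P u → P v)
    (hadj : ∀ u v, G.Adj u v → P u → G'.Adj (f u) (f v) ∨ f u = f v) :
    ∀ a b, G.Reachable a b → P a → G'.Reachable (f a) (f b) := by
  intro a b ⟨w⟩ hPa
  induction w with
  | nil => exact SimpleGraph.Reachable.refl _
  | cons h p ih =>
    rename_i u v c
    have hPv := hPadj u v h hPa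
    have := ih hPv
    rcases hadj u v h hPa with h' | h'
    · exact (SimpleGraph.Adj.reachable h').trans this
    · rw [h']; exact this

lemma horn_min {ι : Type*} [Fintype ι] [DecidableEq ι] (a : ι → ℚ) (c : ℚ)
    (hcard : (Finset.univ.filter fun j => 0 < a j).card ≤ 1)
    (x y : ι → ℤ) (hx : c ≤ ∑ j, a j * (x j : ℚ)) (hy : c ≤ ∑ j, a j * (y j : ℚ)) :
    c ≤ ∑ j, a j * ((min (x j) (y j) : ℤ) : ℚ) := by
  have key : ∀ (x y : ι → ℤ), c ≤ ∑ j, a j * (x j : ℚ) →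
      (∀ p, 0 < a p → x p ≤ y p) →
      c ≤ ∑ j, a j * ((min (x j) (y j) : ℤ) : ℚ) := by
    intro x y hx hle
    refine le_trans hx (Finset.sum_le_sum fun j _ => ?_)
    rcases le_or_gt (a j) 0 with hj | hj
    · have hmin : ((min (x j) (y j) : ℤ) : ℚ) ≤ (x j : ℚ) := by
        exact_mod_cast min_le_left _ _
      exact mul_le_mul_of_nonpos_left hmin hj
    · have : min (x j) (y j) = x j := min_eq_left (hle j hj)
      rw [this]
  rcases Finset.eq_empty_or_nonempty (Finset.univ.filter fun j => 0 < a j) with he | hne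
  · refine key x y hx fun p hp => ?_
    have hmem : p ∈ Finset.univ.filter fun j => 0 < a j :=
      Finset.mem_filter.mpr ⟨Finset.mem_univ p, hp⟩
    rw [he] at hmem
    exact absurd hmem (Finset.notMem_empty p)
  · obtain ⟨p, hp⟩ := hne
    have hpmem := Finset.mem_filter.mp hp
    have huniq : ∀ q, 0 < a q → q = p := by
      intro q hq
      by_contra hne'
      have : ({q, p} : Finset ι) ⊆ Finset.univ.filter fun j => 0 < a j := by
        intro z hz
        simp only [Finset.mem_insert, Finset.mem_singleton] at hz
        rcases hz with rfl | rfl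
        · exact Finset.mem_filter.mpr ⟨Finset.mem_univ _, hq⟩
        · exact hp
      have := Finset.card_le_card this
      rw [Finset.card_insert_of_notMem (by simpa using hne'), Finset.card_singleton] at this
      omega
    rcases le_total (x p) (y p) with hxy | hxy
    · exact key x y hx fun q hq => (huniq q hq) ▸ hxy
    · have := key y x hy fun q hq => (huniq q hq) ▸ hxy
      simpa [min_comm] using this


def glue {n : ℕ} (Q : Finset (Fin n)) (u : {j // j ∈ Q} → ℤ) (y : {j // j ∈ Qᶜ} → ℤ) :
    Fin n → ℤ :=
  fun j => if h : j ∈ Q then u ⟨j, h⟩ else y ⟨j, Finset.mem_compl.mpr h⟩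

lemma glue_projQ {n : ℕ} (Q : Finset (Fin n)) (u : {j // j ∈ Q} → ℤ) (y : {j // j ∈ Qᶜ} → ℤ) :
    (fun j : {j // j ∈ Q} => glue Q u y j.val) = u := by
  funext j; simp [glue, j.2]

lemma glue_projH {n : ℕ} (Q : Finset (Fin n)) (u : {j // j ∈ Q} → ℤ) (y : {j // j ∈ Qᶜ} → ℤ) :
    (fun j : {j // j ∈ Qᶜ} => glue Q u y j.val) = y := by
  funext j
  have : j.val ∉ Q := Finset.mem_compl.mp j.2
  simp [glue, this]

lemma glue_self {n : ℕ} (Q : Finset (Fin n)) (x : Fin n → ℤ) :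
    glue Q (fun j => x j.val) (fun j => x j.val) = x := by
  funext j; by_cases h : j ∈ Q <;> simp [glue, h]

lemma sum_glue {m n : ℕ} (A : Matrix (Fin m) (Fin n) ℚ) (Q : Finset (Fin n)) (i : Fin m)
    (u : {j // j ∈ Q} → ℤ) (y : {j // j ∈ Qᶜ} → ℤ) :
    ∑ j, A i j * ((glue Q u y j : ℤ) : ℚ)
      = (∑ j : {j // j ∈ Q}, A i j.val * (u j : ℚ))
        + ∑ j : {j // j ∈ Qᶜ}, A i j.val * (y j : ℚ) := by
  rw [sum_split Q (fun j => A i j * ((glue Q u y j : ℤ) : ℚ))]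
  have h1 : ∀ j : {j // j ∈ Q}, glue Q u y j.val = u j :=
    fun j => congrFun (glue_projQ Q u y) j
  have h2 : ∀ j : {j // j ∈ Qᶜ}, glue Q u y j.val = y j :=
    fun j => congrFun (glue_projH Q u y) j
  simp only [h1, h2]


theorem stmt_11 {m n : ℕ} (A : Matrix (Fin m) (Fin n) ℚ) (b : Fin m → ℚ) (d : ℕ)
    (hd : 0 < d)
    (Q : Finset (Fin n)) (hQH : QHPartition A Q)
    (S : Finset (Fin m)) (hS : ∀ i, i ∈ S ↔ ∀ jq ∈ Q, A i jq = 0)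
    (s t : Fin n → ℤ) (hs : Feasible A b d s) (ht : Feasible A b d t) :
    -- (1) if `s_H` and `t_H` are not connected in `G(I_H)`, then `s, t` are not
    --     connected in `G(I)`
    (¬ (subGraph A b d S Qᶜ).Reachable (fun j => s j.val) (fun j => t j.val) →
      ¬ (solGraph A b d).Reachable s t) ∧
    -- (2) if they are connected, with unique minimal solution `x*_H` of their common
    --     component, then `s, t` are connected in `G(I)` iff `s_Q, t_Q` are connected
    --     in `G(I_Q)` where `I_Q = (A[S̄,Q], b_{S̄} - A[S̄,H] x*_H, d)`
    (∀ xstar : {j // j ∈ Qᶜ} → ℤ,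
      FeasSub A b d S Qᶜ xstar →
      (subGraph A b d S Qᶜ).Reachable xstar (fun j => s j.val) →
      (subGraph A b d S Qᶜ).Reachable xstar (fun j => t j.val) →
      (∀ y, FeasSub A b d S Qᶜ y →
        (subGraph A b d S Qᶜ).Reachable y (fun j => s j.val) → ∀ j, xstar j ≤ y j) →
      ((solGraph A b d).Reachable s t ↔
        (subGraph A (fun i => b i - ∑ j : {j // j ∈ Qᶜ}, A i j.val * (xstar j : ℚ)) d
            Sᶜ Q).Reachable (fun j => s j.val) (fun j => t j.val))) := by
  obtain ⟨hQ2, hH1, hcnd⟩ := hQH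
  -- rows outside S have nonpositive entries in H columns
  have negH : ∀ i, i ∉ S → ∀ j ∈ Qᶜ, A i j ≤ 0 := by
    intro i hi j hj
    by_contra hpos
    push_neg at hpos
    exact hi ((hS i).mpr (hcnd i ⟨j, hj, hpos⟩))
  -- H-projection of a feasible solution is feasible for the Horn subsystem
  have Hfeas : ∀ x, Feasible A b d x → FeasSub A b d S Qᶜ (fun j => x j.val) := by
    rintro x ⟨hb, hx⟩
    refine ⟨fun j => hb j.val, fun i hi => ?_⟩
    have hQ0 : (∑ j : {j // j ∈ Q}, A i j.val * ((x j.val : ℤ) : ℚ)) = 0 :=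
      Finset.sum_eq_zero fun j _ => by rw [(hS i).mp hi j.val j.2, zero_mul]
    have h := hx i
    rw [sum_split Q (fun j => A i j * ((x j : ℤ) : ℚ)), hQ0, zero_add] at h
    exact h
  -- every edge of G(I) projects to an edge of G(I_H) or collapses
  have edgeH : ∀ x y, (solGraph A b d).Adj x y →
      (subGraph A b d S Qᶜ).Adj (fun j => x j.val) (fun j => y j.val) ∨
      (fun j : {j // j ∈ Qᶜ} => x j.val) = (fun j : {j // j ∈ Qᶜ} => y j.val) := by
    rintro x y ⟨hx, hy, hxy⟩
    have hsplit := ham_split Q x y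
    rw [hxy] at hsplit
    have hle : ((Qᶜ).filter fun j => x j ≠ y j).card ≤ 1 := by omega
    rcases Nat.le_one_iff_eq_zero_or_eq_one.mp hle with h0 | h1
    · right
      exact hammingDist_eq_zero.mp (by rw [ham_restrict Qᶜ x y, h0])
    · left
      exact ⟨Hfeas x hx, Hfeas y hy, by rw [ham_restrict Qᶜ x y, h1]⟩
  constructor
  · -- part (1)
    intro hnot hr
    exact hnot (reach_map (solGraph A b d) (subGraph A b d S Qᶜ)
      (fun x => fun j => x j.val) (fun _ => True) (fun _ _ _ _ => trivial)
      (fun u v h _ => edgeH u v h) s t hr trivial)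
  · -- part (2)
    intro xstar hxf hrs hrt hmin
    set c : Fin m → ℚ :=
      fun i => b i - ∑ j : {j // j ∈ Qᶜ}, A i j.val * (xstar j : ℚ) with hcdef
    -- feasibility for I_Q of the Q-projection of full solutions dominating xstar
    have Qfeas : ∀ x, Feasible A b d x → (∀ j, xstar j ≤ x j.val) →
        FeasSub A c d Sᶜ Q (fun j => x j.val) := by
      rintro x ⟨hbnd, hx⟩ hxs
      refine ⟨fun j => hbnd j.val, fun i hi => ?_⟩
      have hiS : i ∉ S := Finset.mem_compl.mp hi
      have h2 : ∑ j : {j // j ∈ Qᶜ}, A i j.val * ((x j.val : ℤ) : ℚ)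
          ≤ ∑ j : {j // j ∈ Qᶜ}, A i j.val * (xstar j : ℚ) := by
        refine Finset.sum_le_sum fun j _ => ?_
        refine mul_le_mul_of_nonpos_left ?_ (negH i hiS j.val j.2)
        exact_mod_cast hxs j
      have h := hx i
      rw [sum_split Q (fun j => A i j * ((x j : ℤ) : ℚ))] at h
      have : c i = b i - ∑ j : {j // j ∈ Qᶜ}, A i j.val * (xstar j : ℚ) := rfl
      rw [this]
      linarith
    constructor
    · -- forward: project a path onto Q
      intro hr
      refine reach_map (solGraph A b d) (subGraph A c d Sᶜ Q)
        (fun x => fun j => x j.val)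
        (fun x => Feasible A b d x ∧
          (subGraph A b d S Qᶜ).Reachable (fun j => s j.val) (fun j => x j.val))
        ?_ ?_ s t hr ⟨hs, SimpleGraph.Reachable.refl _⟩
      · rintro u v h ⟨hu, hru⟩
        refine ⟨h.2.1, hru.trans ?_⟩
        rcases edgeH u v h with h' | h'
        · exact h'.reachable
        · rw [h']
      · rintro u v h ⟨hu, hru⟩
        have hv : Feasible A b d v := h.2.1
        have hrv : (subGraph A b d S Qᶜ).Reachable (fun j => s j.val)
            (fun j => v j.val) := by
          refine hru.trans ?_
          rcases edgeH u v h with h' | h'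
          · exact h'.reachable
          · rw [h']
        have hxu : ∀ j, xstar j ≤ u j.val := hmin _ (Hfeas u hu) hru.symm
        have hxv : ∀ j, xstar j ≤ v j.val := hmin _ (Hfeas v hv) hrv.symm
        have hsplit := ham_split Q u v
        rw [h.2.2] at hsplit
        have hle : (Q.filter fun j => u j ≠ v j).card ≤ 1 := by omega
        rcases Nat.le_one_iff_eq_zero_or_eq_one.mp hle with h0 | h1
        · right
          exact hammingDist_eq_zero.mp (by rw [ham_restrict Q u v, h0])
        · left
          exact ⟨Qfeas u hu hxu, Qfeas v hv hxv, by rw [ham_restrict Q u v, h1]⟩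
    · -- backward
      intro hq
      have hxs : ∀ j, xstar j ≤ s j.val :=
        hmin _ (Hfeas s hs) (SimpleGraph.Reachable.refl _)
      have hxt : ∀ j, xstar j ≤ t j.val := hmin _ (Hfeas t ht) (hrt.symm.trans hrs)
      obtain ⟨hxb, hxineq⟩ := hxf
      -- lifting I_Q-feasible Q-vectors with H-part xstar
      have glueFeas : ∀ u, FeasSub A c d Sᶜ Q u → Feasible A b d (glue Q u xstar) := by
        rintro u ⟨hub, hu⟩
        constructor
        · intro j
          by_cases h : j ∈ Q
          · simpa [glue, h] using hub ⟨j, h⟩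
          · simpa [glue, h] using hxb ⟨j, Finset.mem_compl.mpr h⟩
        · intro i
          rw [sum_glue A Q i u xstar]
          by_cases hiS : i ∈ S
          · have h0 : (∑ j : {j // j ∈ Q}, A i j.val * (u j : ℚ)) = 0 :=
              Finset.sum_eq_zero fun j _ => by rw [(hS i).mp hiS j.val j.2, zero_mul]
            rw [h0, zero_add]
            exact hxineq i hiS
          · have h := hu i (Finset.mem_compl.mpr hiS)
            have hce : c i = b i - ∑ j : {j // j ∈ Qᶜ}, A i j.val * (xstar j : ℚ) := rfl
            rw [hce] at h
            linarith
      -- middle segment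
      have mid : (solGraph A b d).Reachable
          (glue Q (fun j => s j.val) xstar) (glue Q (fun j => t j.val) xstar) := by
        refine reach_map (subGraph A c d Sᶜ Q) (solGraph A b d)
          (fun u => glue Q u xstar) (fun _ => True) (fun _ _ _ _ => trivial)
          ?_ _ _ hq trivial
        rintro u v ⟨hu, hv, huv⟩ _
        left
        refine ⟨glueFeas u hu, glueFeas v hv, ?_⟩
        show hammingDist (glue Q u xstar) (glue Q v xstar) = 1
        rw [ham_split Q]
        have e1 : (Q.filter fun j => glue Q u xstar j ≠ glue Q v xstar j).card = 1 := by
          rw [← ham_restrict Q, glue_projQ, glue_projQ]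
          exact huv
        have e2 : ((Qᶜ).filter fun j => glue Q u xstar j ≠ glue Q v xstar j).card = 0 := by
          rw [← ham_restrict Qᶜ, glue_projH, glue_projH, hammingDist_self]
        omega
      -- end segments
      have endReach : ∀ z, Feasible A b d z → (∀ j, xstar j ≤ z j.val) →
          (subGraph A b d S Qᶜ).Reachable xstar (fun j => z j.val) →
          (solGraph A b d).Reachable z (glue Q (fun j => z j.val) xstar) := by
        intro z hz hxz hrz
        set f : ({j // j ∈ Qᶜ} → ℤ) → (Fin n → ℤ) :=
          fun y => glue Q (fun j => z j.val) (fun j => min (y j) (z j.val)) with hfdef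
        have mapFeas : ∀ y, FeasSub A b d S Qᶜ y → Feasible A b d (f y) := by
          rintro y ⟨hyb, hy⟩
          constructor
          · intro j
            by_cases h : j ∈ Q
            · simpa [f, glue, h] using hz.1 j
            · have h1 := hyb ⟨j, Finset.mem_compl.mpr h⟩
              have h2 := hz.1 j
              constructor
              · simp only [f, glue, h, dif_neg, not_false_iff]
                exact le_min h1.1 h2.1
              · simp only [f, glue, h, dif_neg, not_false_iff]
                exact le_trans (min_le_left _ _) h1.2
          · intro i
            rw [show f y = glue Q (fun j => z j.val)
              (fun j => min (y j) (z j.val)) from rfl, sum_glue A Q i]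
            by_cases hiS : i ∈ S
            · have h0 : (∑ j : {j // j ∈ Q}, A i j.val * ((z j.val : ℤ) : ℚ)) = 0 :=
                Finset.sum_eq_zero fun j _ => by rw [(hS i).mp hiS j.val j.2, zero_mul]
              rw [h0, zero_add]
              refine horn_min (fun j : {j // j ∈ Qᶜ} => A i j.val) (b i) ?_ y
                (fun j => z j.val) (hy i hiS) ((Hfeas z hz).2 i hiS)
              rw [card_restrict Qᶜ (fun j => 0 < A i j)]
              exact hH1 i
            · have hsum : ∑ j : {j // j ∈ Qᶜ}, A i j.val * ((z j.val : ℤ) : ℚ)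
                  ≤ ∑ j : {j // j ∈ Qᶜ}, A i j.val * ((min (y j) (z j.val) : ℤ) : ℚ) := by
                refine Finset.sum_le_sum fun j _ => ?_
                refine mul_le_mul_of_nonpos_left ?_ (negH i hiS j.val j.2)
                exact_mod_cast min_le_right (y j) (z j.val)
              have h := hz.2 i
              rw [sum_split Q (fun j => A i j * ((z j : ℤ) : ℚ))] at h
              linarith
        have step : ∀ y y', (subGraph A b d S Qᶜ).Adj y y' →
            (solGraph A b d).Adj (f y) (f y') ∨ f y = f y' := by
          rintro y y' ⟨hy, hy', hd1⟩
          have hle : hammingDist (fun j => min (y j) (z j.val))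
              (fun j => min (y' j) (z j.val)) ≤ 1 := by
            rw [← hd1]
            exact hammingDist_comp_le_hammingDist
              (fun (j : {j // j ∈ Qᶜ}) (a : ℤ) => min a (z j.val))
          rcases Nat.le_one_iff_eq_zero_or_eq_one.mp hle with h0 | h1
          · right
            have heq := hammingDist_eq_zero.mp h0
            show glue Q _ _ = glue Q _ _
            rw [heq]
          · left
            refine ⟨mapFeas y ⟨hy.1, hy.2⟩, mapFeas y' ⟨hy'.1, hy'.2⟩, ?_⟩
            show hammingDist (glue Q _ _) (glue Q _ _) = 1
            rw [ham_split Q]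
            have e1 : (Q.filter fun j => glue Q (fun j => z j.val)
                (fun j => min (y j) (z j.val)) j ≠ glue Q (fun j => z j.val)
                (fun j => min (y' j) (z j.val)) j).card = 0 := by
              rw [← ham_restrict Q, glue_projQ, glue_projQ, hammingDist_self]
            have e2 : ((Qᶜ).filter fun j => glue Q (fun j => z j.val)
                (fun j => min (y j) (z j.val)) j ≠ glue Q (fun j => z j.val)
                (fun j => min (y' j) (z j.val)) j).card = 1 := by
              rw [← ham_restrict Qᶜ, glue_projH, glue_projH]
              exact h1
            omega
        have hres := reach_map (subGraph A b d S Qᶜ) (solGraph A b d) f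
          (fun _ => True) (fun _ _ _ _ => trivial) (fun u v h _ => step u v h)
          xstar (fun j => z j.val) hrz trivial
        have e1 : f xstar = glue Q (fun j => z j.val) xstar := by
          have hminx : (fun j : {j // j ∈ Qᶜ} => min (xstar j) (z j.val)) = xstar :=
            funext fun j => min_eq_left (hxz j)
          show glue Q (fun j => z j.val) (fun j => min (xstar j) (z j.val)) = _
          rw [hminx]
        have e2 : f (fun j => z j.val) = z := by
          show glue Q (fun j => z j.val) (fun j => min (z j.val) (z j.val)) = z
          simp only [min_self]
          exact glue_self Q z
        rw [e1, e2] at hres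
        exact hres.symm
      exact ((endReach s hs hxs hrs).trans mid).trans (endReach t ht hxt hrt).symm
end

section
/- Let I = (A,b,d) be an integer linear system with n variables admitting a QH-partition (Q,H). Then any two feasible solutions of I lying in the same connected component of G(I) are joined by a path in G(I) of length at most 2dn; in particular, each connected component of G(I) has diameter O(dn). -/
namespace ILSAux

open Finset

variable {m n : ℕ}

/-! ### Hamming-distance-one lemmas -/

lemma ham1 {x y : Fin n → ℤ} (h : hammingDist x y = 1) :
    ∃ c, x c ≠ y c ∧ ∀ j, j ≠ c → x j = y j := by
  have h' : (Finset.univ.filter fun i => x i ≠ y i).card = 1 := h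
  obtain ⟨c, hc⟩ := Finset.card_eq_one.mp h'
  refine ⟨c, ?_, ?_⟩
  · have : c ∈ Finset.univ.filter fun i => x i ≠ y i := by
      rw [hc]; exact Finset.mem_singleton_self c
    exact (Finset.mem_filter.mp this).2
  · intro j hj
    by_contra hne
    have : j ∈ Finset.univ.filter fun i => x i ≠ y i :=
      Finset.mem_filter.mpr ⟨Finset.mem_univ _, hne⟩
    rw [hc, Finset.mem_singleton] at this
    exact hj this

lemma ham1' {x y : Fin n → ℤ} (c : Fin n) (hc : x c ≠ y c) (ho : ∀ j, j ≠ c → x j = y j) :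
    hammingDist x y = 1 := by
  have : (Finset.univ.filter fun i => x i ≠ y i) = {c} := by
    ext j
    simp only [Finset.mem_filter, Finset.mem_univ, true_and, Finset.mem_singleton]
    constructor
    · intro hne; by_contra hj; exact hne (ho j hj)
    · rintro rfl; exact hc
  show (Finset.univ.filter fun i => x i ≠ y i).card = 1
  rw [this, Finset.card_singleton]

/-! ### Rows, classification, closure operations -/

variable (A : Matrix (Fin m) (Fin n) ℚ) (b : Fin m → ℚ) (d : ℕ) (Q : Finset (Fin n))

def rowS (i : Fin m) (x : Fin n → ℤ) : ℚ := ∑ j, A i j * (x j : ℚ)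

def PosH (i : Fin m) : Prop := ∃ p ∈ Qᶜ, 0 < A i p

def Dom (x : Fin n → ℤ) : Prop := ∀ j, 0 ≤ x j ∧ x j ≤ (d : ℤ)

def HOK (x : Fin n → ℤ) : Prop := ∀ i, PosH A Q i → b i ≤ rowS A i x

def vmin (x y : Fin n → ℤ) : Fin n → ℤ := fun j => min (x j) (y j)

def mixQ (v w : Fin n → ℤ) : Fin n → ℤ := fun j => if j ∈ Q then v j else w j

def med3 (a x c : ℤ) : ℤ := min (max a x) (min (max x c) (max a c))

def medv (a z c : Fin n → ℤ) : Fin n → ℤ := fun j => med3 (a j) (z j) (c j)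

variable {A b d Q}

lemma feas_iff {x : Fin n → ℤ} :
    Feasible A b d x ↔ Dom d x ∧ ∀ i, b i ≤ rowS A i x := Iff.rfl

lemma feas_dom {x : Fin n → ℤ} (h : Feasible A b d x) : Dom d x := h.1

lemma feas_rows {x : Fin n → ℤ} (h : Feasible A b d x) : ∀ i, b i ≤ rowS A i x := h.2

lemma feas_hok {x : Fin n → ℤ} (h : Feasible A b d x) : HOK A b Q x := fun i _ => h.2 i

lemma med3_aac (a c : ℤ) : med3 a a c = a := by
  simp only [med3, max_self]
  rw [min_comm (max a c) (max a c), min_self]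
  exact min_eq_left (le_max_left a c)

lemma med3_acc (a c : ℤ) : med3 a c c = c := by
  simp only [med3, max_self]
  rw [min_eq_left (le_max_right a c), min_eq_right (le_max_right a c)]

lemma med3_eee (e : ℤ) : med3 e e e = e := med3_aac e e

lemma med3_le_max (a x c : ℤ) : med3 a x c ≤ max a c :=
  le_trans (min_le_right _ _) (min_le_right _ _)

lemma min_le_med3 (a x c : ℤ) : min a c ≤ med3 a x c := by
  refine le_min (le_trans (min_le_left a c) (le_max_left a x))
    (le_min (le_trans (min_le_right a c) (le_max_right x c)) (min_le_max ..))

/-- at least two of the three arguments are `≤ med3`. -/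
lemma med3_ge_two (a x c : ℤ) :
    ∃ i j : Fin 3, i ≠ j ∧ ![a, x, c] i ≤ med3 a x c ∧ ![a, x, c] j ≤ med3 a x c := by
  have h1 : min a x ≤ med3 a x c := by
    refine le_min (min_le_max ..) (le_min ?_ ?_)
    · exact le_trans (min_le_right a x) (le_max_left x c)
    · exact le_trans (min_le_left a x) (le_max_left a c)
  have h2 : min x c ≤ med3 a x c := by
    refine le_min ?_ (le_min (min_le_max ..) ?_)
    · exact le_trans (min_le_left x c) (le_max_right a x)
    · exact le_trans (min_le_right x c) (le_max_right a c)
  have h3 : min a c ≤ med3 a x c := min_le_med3 a x c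
  rcases le_total a x with hax | hax
  · rcases le_total a c with hac | hac
    · rcases le_total x c with hxc | hxc
      · exact ⟨0, 1, by decide, by simpa [min_eq_left hax] using h1,
          by simpa [min_eq_left hxc] using h2⟩
      · exact ⟨0, 2, by decide, by simpa [min_eq_left hax] using h1,
          by simpa [min_eq_right hxc] using h2⟩
    · exact ⟨0, 2, by decide, by simpa [min_eq_left hax] using h1,
        by simpa [min_eq_right hac] using h3⟩
  · rcases le_total a c with hac | hac
    · exact ⟨1, 0, by decide, by simpa [min_eq_right hax] using h1,
        by simpa [min_eq_left hac] using h3⟩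
    · exact ⟨1, 2, by decide, by simpa [min_eq_right hax] using h1,
        by simpa [min_eq_right hac] using h3⟩

/-- at least two of the three arguments are `≥ med3`. -/
lemma med3_le_two (a x c : ℤ) :
    ∃ i j : Fin 3, i ≠ j ∧ med3 a x c ≤ ![a, x, c] i ∧ med3 a x c ≤ ![a, x, c] j := by
  have h1 : med3 a x c ≤ max a x := min_le_left _ _
  have h2 : med3 a x c ≤ max x c := le_trans (min_le_right _ _) (min_le_left _ _)
  have h3 : med3 a x c ≤ max a c := med3_le_max a x c
  rcases le_total a x with hax | hax
  · rcases le_total a c with hac | hac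
    · exact ⟨1, 2, by decide, by simpa [max_eq_right hax] using h1,
        by simpa [max_eq_right hac] using h3⟩
    · exact ⟨1, 0, by decide, by simpa [max_eq_right hax] using h1,
        by simpa [max_eq_left hac] using h3⟩
  · rcases le_total x c with hxc | hxc
    · exact ⟨0, 2, by decide, by simpa [max_eq_left hax] using h1,
        by simpa [max_eq_right hxc] using h2⟩
    · exact ⟨0, 1, by decide, by simpa [max_eq_left hax] using h1,
        by simpa [max_eq_left hxc] using h2⟩

section Rows

variable (hQH : QHPartition A Q)
include hQH

/-- structure of a row with a positive entry on `Qᶜ`. -/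
lemma posH_struct (i : Fin m) (hP : PosH A Q i) :
    ∃ p, p ∈ Qᶜ ∧ 0 < A i p ∧ ∀ j, j ≠ p → A i j ≤ 0 := by
  obtain ⟨p, hpQc, hpos⟩ := hP
  refine ⟨p, hpQc, hpos, fun j hj => ?_⟩
  by_cases hjQ : j ∈ Q
  · rw [hQH.2.2 i ⟨p, hpQc, hpos⟩ j hjQ]
  · by_contra hgt
    push_neg at hgt
    have h2 : 1 < ((Qᶜ).filter fun j => 0 < A i j).card :=
      Finset.one_lt_card.mpr ⟨j, Finset.mem_filter.mpr ⟨Finset.mem_compl.mpr hjQ, hgt⟩,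
        p, Finset.mem_filter.mpr ⟨hpQc, hpos⟩, hj⟩
    have := hQH.2.1 i
    omega

/-- Horn rows are min-closed. -/
lemma row_vmin {x y : Fin n → ℤ} (i : Fin m) (hP : PosH A Q i)
    (hx : b i ≤ rowS A i x) (hy : b i ≤ rowS A i y) : b i ≤ rowS A i (vmin x y) := by
  obtain ⟨p, _, hpos, hneg⟩ := posH_struct hQH i hP
  have main : ∀ u v : Fin n → ℤ, u p ≤ v p → b i ≤ rowS A i u → b i ≤ rowS A i (vmin u v) := by
    intro u v hp hu
    refine le_trans hu (Finset.sum_le_sum fun j _ => ?_)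
    by_cases hjp : j = p
    · rw [hjp, show vmin u v p = u p from min_eq_left hp]
    · have h1 : A i j ≤ 0 := hneg j hjp
      have h2 : ((vmin u v j : ℤ) : ℚ) ≤ ((u j : ℤ) : ℚ) := by
        exact_mod_cast min_le_left (u j) (v j)
      exact mul_le_mul_of_nonpos_left h2 h1
  rcases le_total (x p) (y p) with h | h
  · exact main x y h hx
  · have := main y x h hy
    rwa [show vmin y x = vmin x y from funext fun j => min_comm _ _] at this

lemma hok_vmin {x y : Fin n → ℤ} (hx : HOK A b Q x) (hy : HOK A b Q y) :
    HOK A b Q (vmin x y) := fun i hP => row_vmin hQH i hP (hx i hP) (hy i hP)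

/-- mixing: `Q`-part of a feasible `v` with a dominated `Qᶜ`-part `w`. -/
lemma feas_mixQ {v w : Fin n → ℤ} (hv : Feasible A b d v) (hwD : Dom d w)
    (hwH : HOK A b Q w) (hle : ∀ j ∉ Q, w j ≤ v j) : Feasible A b d (mixQ Q v w) := by
  constructor
  · intro j
    by_cases hj : j ∈ Q <;> simp only [mixQ, hj, if_true, if_false]
    · exact hv.1 j
    · exact hwD j
  · intro i
    by_cases hP : PosH A Q i
    · have : rowS A i (mixQ Q v w) = rowS A i w := by
        refine Finset.sum_congr rfl fun j _ => ?_
        by_cases hj : j ∈ Q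
        · rw [hQH.2.2 i hP j hj]; ring
        · simp only [mixQ, hj, if_false]
      show b i ≤ rowS A i (mixQ Q v w)
      rw [this]; exact hwH i hP
    · refine le_trans (hv.2 i) (Finset.sum_le_sum fun j _ => ?_)
      by_cases hj : j ∈ Q
      · simp only [mixQ, hj, if_true]; exact le_refl _
      · simp only [mixQ, hj, if_false]
        have h1 : A i j ≤ 0 := by
          by_contra hgt
          push_neg at hgt
          exact hP ⟨j, Finset.mem_compl.mpr hj, hgt⟩
        have h2 : ((w j : ℤ) : ℚ) ≤ ((v j : ℤ) : ℚ) := by exact_mod_cast hle j hj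
        exact mul_le_mul_of_nonpos_left h2 h1

/-- median closure: if `a z c` are feasible and agree off `Q`, their coordinatewise
median is feasible. -/
lemma feas_medv {a z c : Fin n → ℤ} (ha : Feasible A b d a) (hz : Feasible A b d z)
    (hc : Feasible A b d c) (hQc : ∀ j ∉ Q, a j = z j ∧ c j = z j) :
    Feasible A b d (medv a z c) := by
  have hbox : ∀ j, min (a j) (c j) ≤ medv a z c j ∧ medv a z c j ≤ max (a j) (c j) :=
    fun j => ⟨min_le_med3 _ _ _, med3_le_max _ _ _⟩
  constructor
  · intro j
    constructor
    · exact le_trans (le_min (ha.1 j).1 (hc.1 j).1) (hbox j).1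
    · exact le_trans (hbox j).2 (max_le (ha.1 j).2 (hc.1 j).2)
  · intro i
    set y : Fin 3 → (Fin n → ℤ) := ![a, z, c] with hy
    have hyfeas : ∀ ℓ : Fin 3, Feasible A b d (y ℓ) := by
      intro ℓ; fin_cases ℓ <;> simpa [hy]
    have hyQc : ∀ ℓ : Fin 3, ∀ j ∉ Q, y ℓ j = z j := by
      intro ℓ j hj; fin_cases ℓ
      · exact (hQc j hj).1
      · rfl
      · exact (hQc j hj).2
    have hmedQc : ∀ j ∉ Q, medv a z c j = z j := by
      intro j hj
      show med3 (a j) (z j) (c j) = z j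
      rw [(hQc j hj).1, (hQc j hj).2, med3_eee]
    by_cases hP : PosH A Q i
    · have : rowS A i (medv a z c) = rowS A i z := by
        refine Finset.sum_congr rfl fun j _ => ?_
        by_cases hj : j ∈ Q
        · rw [hQH.2.2 i hP j hj]; ring
        · rw [hmedQc j hj]
      show b i ≤ rowS A i (medv a z c)
      rw [this]; exact hz.2 i
    · -- two-variable rows: find a "winner" among a, z, c
      have hT : ∀ j, 2 ≤ (Finset.univ.filter fun ℓ : Fin 3 =>
          A i j * ((y ℓ j : ℤ) : ℚ) ≤ A i j * ((medv a z c j : ℤ) : ℚ)).card := by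
        intro j
        rcases le_total 0 (A i j) with hs | hs
        · obtain ⟨i1, i2, hne, h1, h2⟩ := med3_ge_two (a j) (z j) (c j)
          have hv : ∀ ℓ : Fin 3, ![a j, z j, c j] ℓ = y ℓ j := by
            intro ℓ; fin_cases ℓ <;> rfl
          have m1 : y i1 j ≤ medv a z c j := by rw [← hv]; exact h1
          have m2 : y i2 j ≤ medv a z c j := by rw [← hv]; exact h2
          have sub : ({i1, i2} : Finset (Fin 3)) ⊆ (Finset.univ.filter fun ℓ : Fin 3 =>
              A i j * ((y ℓ j : ℤ) : ℚ) ≤ A i j * ((medv a z c j : ℤ) : ℚ)) := by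
            intro ℓ hℓ
            rcases Finset.mem_insert.mp hℓ with rfl | hℓ
            · exact Finset.mem_filter.mpr ⟨Finset.mem_univ _,
                mul_le_mul_of_nonneg_left (by exact_mod_cast m1) hs⟩
            · rw [Finset.mem_singleton] at hℓ; subst hℓ
              exact Finset.mem_filter.mpr ⟨Finset.mem_univ _,
                mul_le_mul_of_nonneg_left (by exact_mod_cast m2) hs⟩
          calc 2 = ({i1, i2} : Finset (Fin 3)).card := by
                rw [Finset.card_insert_of_notMem (by simpa using hne), Finset.card_singleton]
            _ ≤ _ := Finset.card_le_card sub
        · obtain ⟨i1, i2, hne, h1, h2⟩ := med3_le_two (a j) (z j) (c j)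
          have hv : ∀ ℓ : Fin 3, ![a j, z j, c j] ℓ = y ℓ j := by
            intro ℓ; fin_cases ℓ <;> rfl
          have m1 : medv a z c j ≤ y i1 j := by rw [← hv]; exact h1
          have m2 : medv a z c j ≤ y i2 j := by rw [← hv]; exact h2
          have sub : ({i1, i2} : Finset (Fin 3)) ⊆ (Finset.univ.filter fun ℓ : Fin 3 =>
              A i j * ((y ℓ j : ℤ) : ℚ) ≤ A i j * ((medv a z c j : ℤ) : ℚ)) := by
            intro ℓ hℓ
            rcases Finset.mem_insert.mp hℓ with rfl | hℓ
            · exact Finset.mem_filter.mpr ⟨Finset.mem_univ _,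
                mul_le_mul_of_nonpos_left (by exact_mod_cast m1) hs⟩
            · rw [Finset.mem_singleton] at hℓ; subst hℓ
              exact Finset.mem_filter.mpr ⟨Finset.mem_univ _,
                mul_le_mul_of_nonpos_left (by exact_mod_cast m2) hs⟩
          calc 2 = ({i1, i2} : Finset (Fin 3)).card := by
                rw [Finset.card_insert_of_notMem (by simpa using hne), Finset.card_singleton]
            _ ≤ _ := Finset.card_le_card sub
      -- the support of the row inside Q has at most 2 elements
      set F := Q.filter fun j => A i j ≠ 0 with hF
      have hFcard : F.card ≤ 2 := hQH.1 i
      -- find a winner index ℓ good for all j ∈ F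
      have hwin : ∃ ℓ : Fin 3, ∀ j ∈ F,
          A i j * ((y ℓ j : ℤ) : ℚ) ≤ A i j * ((medv a z c j : ℤ) : ℚ) := by
        rcases Finset.eq_empty_or_nonempty F with hFe | ⟨j₀, hj₀⟩
        · exact ⟨0, fun j hj => by simp [hFe] at hj⟩
        · rcases Finset.eq_empty_or_nonempty (F.erase j₀) with hFe | ⟨k₀, hk₀⟩
          · obtain ⟨ℓ, hℓ⟩ := Finset.card_pos.mp (by have := hT j₀; omega :
              0 < (Finset.univ.filter fun ℓ : Fin 3 =>
                A i j₀ * ((y ℓ j₀ : ℤ) : ℚ) ≤ A i j₀ * ((medv a z c j₀ : ℤ) : ℚ)).card)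
            refine ⟨ℓ, fun j hj => ?_⟩
            have : j = j₀ := by
              by_contra hne
              exact absurd (Finset.mem_erase.mpr ⟨hne, hj⟩) (by simp [hFe])
            subst this
            exact (Finset.mem_filter.mp hℓ).2
          · have hsub : F ⊆ {j₀, k₀} := by
              intro j hj
              by_cases hjj : j = j₀
              · subst hjj; exact Finset.mem_insert_self _ _
              · have hjF' : j ∈ F.erase j₀ := Finset.mem_erase.mpr ⟨hjj, hj⟩
                have hcard' : (F.erase j₀).card ≤ 1 := by
                  have := Finset.card_erase_of_mem hj₀
                  omega
                have : j = k₀ := by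
                  have := Finset.card_le_one.mp hcard' j hjF' k₀ hk₀
                  exact this
                subst this
                exact Finset.mem_insert_of_mem (Finset.mem_singleton_self _)
            set T1 := Finset.univ.filter fun ℓ : Fin 3 =>
              A i j₀ * ((y ℓ j₀ : ℤ) : ℚ) ≤ A i j₀ * ((medv a z c j₀ : ℤ) : ℚ) with hT1
            set T2 := Finset.univ.filter fun ℓ : Fin 3 =>
              A i k₀ * ((y ℓ k₀ : ℤ) : ℚ) ≤ A i k₀ * ((medv a z c k₀ : ℤ) : ℚ) with hT2
            have hnonempty : (T1 ∩ T2).Nonempty := by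
              by_contra hne
              rw [Finset.not_nonempty_iff_eq_empty] at hne
              have hdis : Disjoint T1 T2 := Finset.disjoint_iff_inter_eq_empty.mpr hne
              have : (T1 ∪ T2).card = T1.card + T2.card := Finset.card_union_of_disjoint hdis
              have hle : (T1 ∪ T2).card ≤ 3 := by
                have := Finset.card_le_card (Finset.subset_univ (T1 ∪ T2))
                simpa using this
              have := hT j₀
              have := hT k₀
              rw [← hT1, ← hT2] at *
              omega
            obtain ⟨ℓ, hℓ⟩ := hnonempty
            refine ⟨ℓ, fun j hj => ?_⟩
            rcases Finset.mem_insert.mp (hsub hj) with rfl | hj2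
            · exact (Finset.mem_filter.mp (Finset.mem_inter.mp hℓ).1).2
            · rw [Finset.mem_singleton] at hj2; subst hj2
              exact (Finset.mem_filter.mp (Finset.mem_inter.mp hℓ).2).2
      obtain ⟨ℓ, hℓ⟩ := hwin
      refine le_trans ((hyfeas ℓ).2 i) (Finset.sum_le_sum fun j _ => ?_)
      by_cases hj : j ∈ Q
      · by_cases hA : A i j = 0
        · rw [hA]; ring_nf; exact le_refl _
        · exact hℓ j (Finset.mem_filter.mpr ⟨hj, hA⟩)
      · rw [hmedQc j hj, hyQc ℓ j hj]

end Rows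

/-! ### Bounded-length reachability -/

variable (A b d)

def DW (x y : Fin n → ℤ) (B : ℤ) : Prop :=
  ∃ w : (solGraph A b d).Walk x y, (w.length : ℤ) ≤ B

variable {A b d}

lemma dw_self {x : Fin n → ℤ} {B : ℤ} (h : 0 ≤ B) : DW A b d x x B :=
  ⟨SimpleGraph.Walk.nil, by simpa using h⟩

lemma dw_mono {x y : Fin n → ℤ} {B B' : ℤ} (h : DW A b d x y B) (hB : B ≤ B') :
    DW A b d x y B' := by obtain ⟨w, hw⟩ := h; exact ⟨w, le_trans hw hB⟩

lemma dw_trans {x y z : Fin n → ℤ} {B1 B2 : ℤ} (h1 : DW A b d x y B1) (h2 : DW A b d y z B2) :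
    DW A b d x z (B1 + B2) := by
  obtain ⟨w1, hw1⟩ := h1; obtain ⟨w2, hw2⟩ := h2
  exact ⟨w1.append w2, by rw [SimpleGraph.Walk.length_append]; push_cast; linarith⟩

lemma dw_symm {x y : Fin n → ℤ} {B : ℤ} (h : DW A b d x y B) : DW A b d y x B := by
  obtain ⟨w, hw⟩ := h
  exact ⟨w.reverse, by rwa [SimpleGraph.Walk.length_reverse]⟩

lemma dw_concat {x y z : Fin n → ℤ} {B : ℤ} (h : DW A b d x y B)
    (ha : (solGraph A b d).Adj y z) : DW A b d x z (B + 1) :=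
  dw_trans h ⟨SimpleGraph.Walk.cons ha SimpleGraph.Walk.nil, by simp⟩

lemma dw_cons {x y z : Fin n → ℤ} {B : ℤ} (ha : (solGraph A b d).Adj x y)
    (h : DW A b d y z B) : DW A b d x z (B + 1) := by
  have := dw_trans (⟨SimpleGraph.Walk.cons ha SimpleGraph.Walk.nil, by simp⟩ :
    DW A b d x y 1) h
  rwa [add_comm] at this

lemma adj_parts {x y : Fin n → ℤ} (h : (solGraph A b d).Adj x y) :
    Feasible A b d x ∧ Feasible A b d y ∧ hammingDist x y = 1 := h

lemma support_feasible : ∀ {s t : Fin n → ℤ} (W : (solGraph A b d).Walk s t),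
    Feasible A b d s → ∀ z ∈ W.support, Feasible A b d z := by
  intro s t W
  induction W with
  | nil =>
    intro hs z hz
    rw [SimpleGraph.Walk.support_nil, List.mem_singleton] at hz
    subst hz; exact hs
  | cons h p ih =>
    intro hs z hz
    rw [SimpleGraph.Walk.support_cons] at hz
    rcases List.mem_cons.mp hz with rfl | hz2
    · exact hs
    · exact ih (adj_parts h).2.1 z hz2

lemma getLast?_support : ∀ {s t : Fin n → ℤ} (W : (solGraph A b d).Walk s t),
    W.support.getLast? = some t := by
  intro s t W
  induction W with
  | nil => simp
  | cons h p ih =>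
    rw [SimpleGraph.Walk.support_cons, SimpleGraph.Walk.support_eq_cons p,
      List.getLast?_cons_cons, ← SimpleGraph.Walk.support_eq_cons p]
    exact ih

/-! ### pointwise minimum over a list of vectors -/

variable (Q) in
def lmin (l : List (Fin n → ℤ)) (e : Fin n → ℤ) : Fin n → ℤ := l.foldr vmin e

lemma lmin_le_seed {l : List (Fin n → ℤ)} {e : Fin n → ℤ} (j : Fin n) : lmin l e j ≤ e j := by
  induction l with
  | nil => exact le_refl _
  | cons a l ih => exact le_trans (min_le_right _ _) ih

lemma lmin_le_mem {l : List (Fin n → ℤ)} {e z : Fin n → ℤ} (hz : z ∈ l) (j : Fin n) :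
    lmin l e j ≤ z j := by
  induction l with
  | nil => simp at hz
  | cons a l ih =>
    rcases List.mem_cons.mp hz with rfl | hz2
    · exact min_le_left _ _
    · exact le_trans (min_le_right _ _) (ih hz2)

lemma lmin_cases {l : List (Fin n → ℤ)} {e : Fin n → ℤ} (j : Fin n) :
    lmin l e j = e j ∨ ∃ z ∈ l, lmin l e j = z j := by
  induction l with
  | nil => exact Or.inl rfl
  | cons a l ih =>
    have hd : lmin (a :: l) e j = min (a j) (lmin l e j) := rfl
    rcases le_total (a j) (lmin l e j) with h | h
    · exact Or.inr ⟨a, List.mem_cons_self, hd.trans (min_eq_left h)⟩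
    · rcases ih with he | ⟨z, hz, hze⟩
      · exact Or.inl (hd.trans ((min_eq_right h).trans he))
      · exact Or.inr ⟨z, List.mem_cons_of_mem _ hz, hd.trans ((min_eq_right h).trans hze)⟩

lemma lmin_dom {l : List (Fin n → ℤ)} {e : Fin n → ℤ} (he : Dom d e)
    (hl : ∀ z ∈ l, Dom d z) : Dom d (lmin l e) := by
  induction l with
  | nil => exact he
  | cons a l ih =>
    intro j
    have h1 := hl a (List.mem_cons_self) j
    have h2 := ih (fun z hz => hl z (List.mem_cons_of_mem _ hz)) j
    exact ⟨le_min h1.1 h2.1, le_trans (min_le_left _ _) h1.2⟩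

lemma lmin_hok (hQH : QHPartition A Q) {l : List (Fin n → ℤ)} {e : Fin n → ℤ}
    (he : HOK A b Q e) (hl : ∀ z ∈ l, HOK A b Q z) : HOK A b Q (lmin l e) := by
  induction l with
  | nil => exact he
  | cons a l ih =>
    exact hok_vmin hQH (hl a (List.mem_cons_self))
      (ih (fun z hz => hl z (List.mem_cons_of_mem _ hz)))

/-! ### Phase 1: descent to the running minimum on `Qᶜ` -/

lemma descend (hQH : QHPartition A Q) :
    ∀ {s t : Fin n → ℤ} (W : (solGraph A b d).Walk s t), Feasible A b d s →
      DW A b d t (mixQ Q t (lmin W.support t)) (∑ j ∈ Qᶜ, (t j - lmin W.support t j)) := by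
  intro s₀ t₀ W
  induction W with
  | nil =>
    intro hs
    have h1 : ∀ u : Fin n → ℤ,
        lmin (SimpleGraph.Walk.nil : (solGraph A b d).Walk u u).support u = u :=
      fun u => funext fun j => min_self _
    have h2 : ∀ u : Fin n → ℤ, mixQ Q u u = u := fun u => funext fun j => ite_self _
    rw [h1, h2]
    have h3 : ∀ u : Fin n → ℤ, (∑ j ∈ Qᶜ, (u j - u j)) = (0 : ℤ) := fun u => by simp
    rw [h3]
    exact dw_self (le_refl 0)
  | @cons s x t h p ih =>
    intro hs
    obtain ⟨hfs, hfx, hham⟩ := adj_parts h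
    have hsup : (SimpleGraph.Walk.cons h p).support = s :: p.support :=
      SimpleGraph.Walk.support_cons h p
    rw [hsup]
    have hfold : lmin (s :: p.support) t = vmin s (lmin p.support t) := rfl
    rw [hfold]
    set m' := lmin p.support t with hm'def
    set mm := vmin s m' with hmmdef
    have hft : Feasible A b d t := support_feasible p hfx t p.end_mem_support
    have hm't : ∀ j, m' j ≤ t j := fun j => lmin_le_seed j
    have hm'x : ∀ j, m' j ≤ x j := fun j => lmin_le_mem p.start_mem_support j
    obtain ⟨c, hc, ho⟩ := ham1 hham
    have hoffeq : ∀ j, j ≠ c → mm j = m' j := by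
      intro j hj
      show min (s j) (m' j) = m' j
      rw [ho j hj]
      exact min_eq_right (hm'x j)
    by_cases hsame : ∀ j, j ∉ Q → mm j = m' j
    · have e1 : mixQ Q t mm = mixQ Q t m' := by
        funext j
        by_cases hj : j ∈ Q <;> simp only [mixQ, hj, if_true, if_false]
        exact hsame j hj
      have e2 : ∑ j ∈ Qᶜ, (t j - mm j) = ∑ j ∈ Qᶜ, (t j - m' j) :=
        Finset.sum_congr rfl fun j hj => by rw [hsame j (Finset.mem_compl.mp hj)]
      rw [e1, e2]
      exact ih hfx
    · -- the new vertex dips below the old minimum at coordinate c ∉ Q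
      push_neg at hsame
      obtain ⟨j₀, hj₀Q, hj₀ne⟩ := hsame
      have hj₀c : j₀ = c := by
        by_contra hne
        exact hj₀ne (hoffeq j₀ hne)
      subst hj₀c
      have hcQ : j₀ ∉ Q := hj₀Q
      have hlt : s j₀ < m' j₀ := by
        have : min (s j₀) (m' j₀) ≠ m' j₀ := hj₀ne
        rcases le_total (s j₀) (m' j₀) with h1 | h1
        · rcases lt_or_eq_of_le h1 with h2 | h2
          · exact h2
          · exact absurd (by rw [hmmdef]; show min _ _ = _; omega) hj₀ne
        · exact absurd (by rw [hmmdef]; show min _ _ = _; exact min_eq_right h1) hj₀ne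
      have hdomm' : Dom d m' := lmin_dom hft.1 (fun z hz => (support_feasible p hfx z hz).1)
      have hhokm' : HOK A b Q m' :=
        lmin_hok hQH (feas_hok hft) (fun z hz => feas_hok (support_feasible p hfx z hz))
      have hdommm : Dom d mm := fun j =>
        ⟨le_min (hfs.1 j).1 (hdomm' j).1, le_trans (min_le_left _ _) (hfs.1 j).2⟩
      have hhokmm : HOK A b Q mm := hok_vmin hQH (feas_hok hfs) hhokm'
      have hmmle : ∀ j, mm j ≤ m' j := fun j => min_le_right _ _
      have hz' : Feasible A b d (mixQ Q t m') :=
        feas_mixQ hQH hft hdomm' hhokm' (fun j _ => hm't j)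
      have hz'' : Feasible A b d (mixQ Q t mm) :=
        feas_mixQ hQH hft hdommm hhokmm (fun j _ => le_trans (hmmle j) (hm't j))
      have hmmc : mm j₀ = s j₀ := min_eq_left (le_of_lt hlt)
      have hadj : (solGraph A b d).Adj (mixQ Q t m') (mixQ Q t mm) := by
        refine ⟨hz', hz'', ham1' j₀ ?_ ?_⟩
        · show (if j₀ ∈ Q then t j₀ else m' j₀) ≠ (if j₀ ∈ Q then t j₀ else mm j₀)
          rw [if_neg hcQ, if_neg hcQ, hmmc]
          omega
        · intro j hj
          show (if j ∈ Q then t j else m' j) = (if j ∈ Q then t j else mm j)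
          by_cases hjQ : j ∈ Q
          · rw [if_pos hjQ, if_pos hjQ]
          · rw [if_neg hjQ, if_neg hjQ, hoffeq j hj]
      have hstep := dw_concat (ih hfx) hadj
      refine dw_mono hstep ?_
      have e3 : ∑ j ∈ Qᶜ, (t j - mm j) =
          (∑ j ∈ Qᶜ, (t j - m' j)) + ∑ j ∈ Qᶜ, (m' j - mm j) := by
        rw [← Finset.sum_add_distrib]
        exact Finset.sum_congr rfl fun j _ => by ring
      have e4 : ∑ j ∈ Qᶜ, (m' j - mm j) = m' j₀ - mm j₀ :=
        Finset.sum_eq_single_of_mem j₀ (Finset.mem_compl.mpr hcQ)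
          (fun j _ hjc => by rw [hoffeq j hjc]; ring)
      rw [e3, e4, hmmc]
      omega

/-! ### chain helpers -/

lemma chain'_map_mem {α β : Type*} {R : α → α → Prop} {R' : β → β → Prop} (f : α → β) :
    ∀ l : List α, l.Chain' R → (∀ a ∈ l, ∀ b ∈ l, R a b → R' (f a) (f b)) →
      (l.map f).Chain' R' := by
  intro l
  induction l with
  | nil => intro _ _; exact List.isChain_nil
  | cons a l ih =>
    intro hch hf
    cases l with
    | nil => exact List.isChain_singleton _
    | cons b l2 =>
      obtain ⟨hab, hch2⟩ := List.isChain_cons_cons.mp hch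
      rw [List.map_cons, List.map_cons, List.Chain', List.isChain_cons_cons]
      refine ⟨hf a (List.mem_cons_self) b (List.mem_cons_of_mem _ (List.mem_cons_self)) hab, ?_⟩
      have := ih hch2 (fun p hp q hq hr =>
        hf p (List.mem_cons_of_mem _ hp) q (List.mem_cons_of_mem _ hq) hr)
      simpa [List.Chain'] using this

lemma split_first {α : Type*} (R : α → α → Prop) :
    ∀ (l : List α) (s' t' : α), l.Chain' (fun a b => a = b ∨ R a b) →
      l.head? = some s' → l.getLast? = some t' →
      s' = t' ∨ ∃ x l₂, R s' x ∧ (x :: l₂).Chain' (fun a b => a = b ∨ R a b) ∧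
        (x :: l₂).getLast? = some t' ∧ (∀ z ∈ x :: l₂, z ∈ l) ∧
        (x :: l₂).length < l.length := by
  intro l
  induction l with
  | nil => intro s' t' _ hh _; simp at hh
  | cons a l ih =>
    intro s' t' hch hh hl
    have has' : a = s' := by simpa using hh
    subst has'
    cases l with
    | nil =>
      left
      simpa using hl
    | cons b l2 =>
      obtain ⟨hab, hch2⟩ := List.isChain_cons_cons.mp hch
      have hl2 : (b :: l2).getLast? = some t' := by rwa [List.getLast?_cons_cons] at hl
      rcases hab with heq | hR
      · rcases ih a t' hch2 (by simp [← heq]) hl2 with h | ⟨x, l₂, hRx, hcx, hlx, hmx, hlen⟩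
        · exact Or.inl h
        · exact Or.inr ⟨x, l₂, hRx, hcx, hlx,
            fun z hz => List.mem_cons_of_mem a (hmx z hz),
            lt_trans hlen (by simp)⟩
      · exact Or.inr ⟨b, l2, hR, hch2, hl2,
          fun z hz => List.mem_cons_of_mem a hz, by simp⟩

lemma int_abs_step {a v c : ℤ} (h1 : min a c ≤ v) (h2 : v ≤ max a c) (hv : v ≠ a) :
    |v - c| + 1 ≤ |a - c| := by
  rcases le_total a c with h | h
  · rw [min_eq_left h] at h1
    rw [max_eq_right h] at h2
    rw [abs_of_nonpos (by omega : v - c ≤ 0), abs_of_nonpos (by omega : a - c ≤ 0)]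
    omega
  · rw [min_eq_right h] at h1
    rw [max_eq_left h] at h2
    rw [abs_of_nonneg (by omega : 0 ≤ v - c), abs_of_nonneg (by omega : 0 ≤ a - c)]
    omega

/-! ### Phase 2: shortening a walk whose vertices agree off `Q` -/

lemma mid (hQH : QHPartition A Q) (μ : Fin n → ℤ) :
    ∀ L : ℕ, ∀ l : List (Fin n → ℤ), l.length ≤ L →
      l.Chain' (fun u v => u = v ∨ (solGraph A b d).Adj u v) →
      (∀ z ∈ l, Feasible A b d z) → (∀ z ∈ l, ∀ j, j ∉ Q → z j = μ j) →
      ∀ s' t', l.head? = some s' → l.getLast? = some t' →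
      DW A b d s' t' (∑ j ∈ Q, |s' j - t' j|) := by
  intro L
  induction L with
  | zero =>
    intro l hlen _ _ _ s' t' hh _
    have : l = [] := List.length_eq_zero_iff.mp (Nat.le_zero.mp hlen)
    subst this
    simp at hh
  | succ L ih =>
    intro l hlen hch hf hμ s' t' hh hl
    have hs'm : s' ∈ l := List.mem_of_mem_head? (by rw [hh]; rfl)
    have ht'm : t' ∈ l := List.mem_of_mem_getLast? (by rw [hl]; rfl)
    have hfs' := hf s' hs'm
    have hft' := hf t' ht'm
    set f : (Fin n → ℤ) → (Fin n → ℤ) := fun z => medv s' z t' with hfdef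
    have hfeasf : ∀ w ∈ l, Feasible A b d (f w) := by
      intro w hw
      exact feas_medv hQH hfs' (hf w hw) hft' (fun j hj =>
        ⟨(hμ s' hs'm j hj).trans (hμ w hw j hj).symm,
         (hμ t' ht'm j hj).trans (hμ w hw j hj).symm⟩)
    set l' := l.map f with hl'def
    have hfeas' : ∀ z ∈ l', Feasible A b d z := by
      intro z hz
      rw [hl'def, List.mem_map] at hz
      obtain ⟨w, hw, rfl⟩ := hz
      exact hfeasf w hw
    have hμ' : ∀ z ∈ l', ∀ j, j ∉ Q → z j = μ j := by
      intro z hz j hj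
      rw [hl'def, List.mem_map] at hz
      obtain ⟨w, hw, rfl⟩ := hz
      show med3 (s' j) (w j) (t' j) = μ j
      rw [hμ s' hs'm j hj, hμ w hw j hj, hμ t' ht'm j hj, med3_eee]
    have hbox : ∀ z ∈ l', ∀ j, min (s' j) (t' j) ≤ z j ∧ z j ≤ max (s' j) (t' j) := by
      intro z hz j
      rw [hl'def, List.mem_map] at hz
      obtain ⟨w, hw, rfl⟩ := hz
      exact ⟨min_le_med3 _ _ _, med3_le_max _ _ _⟩
    have hch' : l'.Chain' (fun u v => u = v ∨ (solGraph A b d).Adj u v) := by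
      refine chain'_map_mem f l hch ?_
      intro p hp q hq hr
      rcases hr with rfl | hadj
      · exact Or.inl rfl
      · obtain ⟨c, hc, ho⟩ := ham1 (adj_parts hadj).2.2
        have hoff : ∀ j, j ≠ c → f p j = f q j := fun j hj => by
          show med3 _ _ _ = med3 _ _ _
          rw [ho j hj]
        by_cases he : f p c = f q c
        · refine Or.inl (funext fun j => ?_)
          by_cases hjc : j = c
          · subst hjc; exact he
          · exact hoff j hjc
        · exact Or.inr ⟨hfeasf p hp, hfeasf q hq, ham1' c he hoff⟩
    have hfs'id : f s' = s' := funext fun j => med3_aac _ _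
    have hft'id : f t' = t' := funext fun j => med3_acc _ _
    have hh' : l'.head? = some s' := by
      rw [hl'def, List.head?_map, hh]
      simp [hfs'id]
    have hlast' : l'.getLast? = some t' := by
      rw [hl'def, List.getLast?_map, hl]
      simp [hft'id]
    rcases split_first _ l' s' t' hch' hh' hlast' with heq | ⟨x, l₂, hadj, hch₂, hlast₂, hmem₂, hlen₂⟩
    · subst heq
      exact dw_self (Finset.sum_nonneg fun j _ => abs_nonneg _)
    · have hxl' : x ∈ l' := hmem₂ x (List.mem_cons_self)
      have hlen' : (x :: l₂).length ≤ L := by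
        have hmap : l'.length = l.length := by rw [hl'def, List.length_map]
        omega
      have hrec := ih (x :: l₂) hlen' hch₂ (fun z hz => hfeas' z (hmem₂ z hz))
        (fun z hz => hμ' z (hmem₂ z hz)) x t' rfl hlast₂
      obtain ⟨c, hc, ho⟩ := ham1 (adj_parts hadj).2.2
      have hcQ : c ∈ Q := by
        by_contra hcn
        exact hc ((hμ s' hs'm c hcn).trans (hμ' x hxl' c hcn).symm)
      have hbnd : (∑ j ∈ Q, |x j - t' j|) + 1 ≤ ∑ j ∈ Q, |s' j - t' j| := by
        have e1 : ∑ j ∈ Q, (|s' j - t' j| - |x j - t' j|) = |s' c - t' c| - |x c - t' c| :=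
          Finset.sum_eq_single_of_mem c hcQ (fun j _ hjc => by rw [ho j hjc]; ring)
        have e2 : |x c - t' c| + 1 ≤ |s' c - t' c| := by
          have hb := hbox x hxl' c
          exact int_abs_step hb.1 hb.2 (Ne.symm hc)
        have e3 : ∑ j ∈ Q, (|s' j - t' j| - |x j - t' j|) =
            (∑ j ∈ Q, |s' j - t' j|) - ∑ j ∈ Q, |x j - t' j| := Finset.sum_sub_distrib _ _
        omega
      exact dw_mono (dw_cons hadj hrec) hbnd

end ILSAux

open ILSAux

theorem stmt_12 {m n : ℕ} (A : Matrix (Fin m) (Fin n) ℚ) (b : Fin m → ℚ) (d : ℕ)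
    (hd : 0 < d)
    (Q : Finset (Fin n)) (hQH : QHPartition A Q)
    (s t : Fin n → ℤ) (hs : Feasible A b d s) (ht : Feasible A b d t)
    (hr : (solGraph A b d).Reachable s t) :
    ∃ p : (solGraph A b d).Walk s t, p.length ≤ 2 * d * n := by
  classical
  obtain ⟨W⟩ := hr
  -- the pointwise minimum over the walk's support
  set mv := lmin W.support t with hmv
  have hsupf : ∀ z ∈ W.support, Feasible A b d z := support_feasible W hs
  have hdom : Dom d mv := lmin_dom ht.1 (fun z hz => (hsupf z hz).1)
  have hhok : HOK A b Q mv := lmin_hok hQH (feas_hok ht) (fun z hz => feas_hok (hsupf z hz))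
  have hmle : ∀ z ∈ W.support, ∀ j, mv j ≤ z j := fun z hz j => lmin_le_mem hz j
  have hmt : ∀ j, mv j ≤ t j := fun j => lmin_le_seed j
  have hms : ∀ j, mv j ≤ s j := hmle s W.start_mem_support
  -- the minimum over the reversed walk is the same
  set mr := lmin W.reverse.support s with hmr
  have hrevmem : ∀ z : Fin n → ℤ, z ∈ W.reverse.support ↔ z ∈ W.support := by
    intro z
    rw [SimpleGraph.Walk.support_reverse, List.mem_reverse]
  have hrvs : mr = mv := by
    funext j
    apply le_antisymm
    · rcases lmin_cases (l := W.support) (e := t) j with he | ⟨z, hz, hzeq⟩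
      · rw [hmv, he]
        exact lmin_le_mem ((hrevmem t).mpr W.end_mem_support) j
      · rw [hmv, hzeq]
        exact lmin_le_mem ((hrevmem z).mpr hz) j
    · rcases lmin_cases (l := W.reverse.support) (e := s) j with he | ⟨z, hz, hzeq⟩
      · rw [hmr, he]
        exact hms j
      · rw [hmr, hzeq]
        exact hmle z ((hrevmem z).mp hz) j
  -- phase 1 at s (via the reversed walk) and at t
  have D1 : DW A b d s (mixQ Q s mv) (∑ j ∈ Qᶜ, (s j - mv j)) := by
    have := descend hQH W.reverse ht
    rw [← hmr, hrvs] at this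
    exact this
  have D3 : DW A b d (mixQ Q t mv) t (∑ j ∈ Qᶜ, (t j - mv j)) := by
    have := descend hQH W hs
    rw [← hmv] at this
    exact dw_symm this
  -- phase 2: the projected walk
  set l := W.support.map (fun z => mixQ Q z mv) with hldef
  have hch : l.Chain' (fun u v => u = v ∨ (solGraph A b d).Adj u v) := by
    refine chain'_map_mem _ W.support W.isChain_adj_support ?_
    intro p hp q hq hpq
    obtain ⟨hfp, hfq, hham⟩ := adj_parts hpq
    obtain ⟨c, hc, ho⟩ := ham1 hham
    have fp : Feasible A b d (mixQ Q p mv) := feas_mixQ hQH hfp hdom hhok (fun j _ => hmle p hp j)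
    have fq : Feasible A b d (mixQ Q q mv) := feas_mixQ hQH hfq hdom hhok (fun j _ => hmle q hq j)
    by_cases hcQ : c ∈ Q
    · refine Or.inr ⟨fp, fq, ham1' c ?_ ?_⟩
      · show (if c ∈ Q then p c else mv c) ≠ (if c ∈ Q then q c else mv c)
        rw [if_pos hcQ, if_pos hcQ]
        exact hc
      · intro j hj
        show (if j ∈ Q then p j else mv j) = (if j ∈ Q then q j else mv j)
        by_cases hjQ : j ∈ Q
        · rw [if_pos hjQ, if_pos hjQ, ho j hj]
        · rw [if_neg hjQ, if_neg hjQ]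
    · refine Or.inl (funext fun j => ?_)
      show (if j ∈ Q then p j else mv j) = (if j ∈ Q then q j else mv j)
      by_cases hjQ : j ∈ Q
      · rw [if_pos hjQ, if_pos hjQ, ho j (fun hh => hcQ (hh ▸ hjQ))]
      · rw [if_neg hjQ, if_neg hjQ]
  have hfl : ∀ z ∈ l, Feasible A b d z := by
    intro z hz
    rw [hldef, List.mem_map] at hz
    obtain ⟨w, hw, rfl⟩ := hz
    exact feas_mixQ hQH (hsupf w hw) hdom hhok (fun j _ => hmle w hw j)
  have hμl : ∀ z ∈ l, ∀ j, j ∉ Q → z j = mv j := by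
    intro z hz j hj
    rw [hldef, List.mem_map] at hz
    obtain ⟨w, hw, rfl⟩ := hz
    show (if j ∈ Q then w j else mv j) = mv j
    rw [if_neg hj]
  have hhead : l.head? = some (mixQ Q s mv) := by
    rw [hldef, List.head?_map, SimpleGraph.Walk.support_eq_cons W]
    rfl
  have hlast : l.getLast? = some (mixQ Q t mv) := by
    rw [hldef, List.getLast?_map, getLast?_support W]
    rfl
  have D2 : DW A b d (mixQ Q s mv) (mixQ Q t mv)
      (∑ j ∈ Q, |mixQ Q s mv j - mixQ Q t mv j|) :=
    mid hQH mv l.length l le_rfl hch hfl hμl _ _ hhead hlast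
  have hsumeq : (∑ j ∈ Q, |mixQ Q s mv j - mixQ Q t mv j|) = ∑ j ∈ Q, |s j - t j| := by
    refine Finset.sum_congr rfl fun j hj => ?_
    show |(if j ∈ Q then s j else mv j) - (if j ∈ Q then t j else mv j)| = _
    rw [if_pos hj, if_pos hj]
  rw [hsumeq] at D2
  -- compose and bound
  have D : DW A b d s t ((∑ j ∈ Qᶜ, (s j - mv j)) +
      ((∑ j ∈ Q, |s j - t j|) + ∑ j ∈ Qᶜ, (t j - mv j))) :=
    dw_trans D1 (dw_trans D2 D3)
  have hbound : (∑ j ∈ Qᶜ, (s j - mv j)) +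
      ((∑ j ∈ Q, |s j - t j|) + ∑ j ∈ Qᶜ, (t j - mv j)) ≤ ((2 * d * n : ℕ) : ℤ) := by
    have h1 : (∑ j ∈ Qᶜ, (s j - mv j)) + (∑ j ∈ Qᶜ, (t j - mv j)) =
        ∑ j ∈ Qᶜ, ((s j - mv j) + (t j - mv j)) := Finset.sum_add_distrib.symm
    have h2 : ∑ j ∈ Qᶜ, ((s j - mv j) + (t j - mv j)) ≤ ∑ j ∈ Qᶜ, (2 * (d : ℤ)) := by
      refine Finset.sum_le_sum fun j _ => ?_
      have e1 := hs.1 j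
      have e2 := ht.1 j
      have e3 := hdom j
      omega
    have h3 : (∑ j ∈ Q, |s j - t j|) ≤ ∑ j ∈ Q, (2 * (d : ℤ)) := by
      refine Finset.sum_le_sum fun j _ => ?_
      have e1 := hs.1 j
      have e2 := ht.1 j
      have : |s j - t j| ≤ (d : ℤ) := abs_le.mpr ⟨by omega, by omega⟩
      omega
    have h4 : (∑ j ∈ Qᶜ, (2 * (d : ℤ))) + (∑ j ∈ Q, (2 * (d : ℤ))) = ((2 * d * n : ℕ) : ℤ) := by
      rw [Finset.sum_const, Finset.sum_const, nsmul_eq_mul, nsmul_eq_mul]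
      have hcard : (Q.card : ℤ) + (Qᶜ.card : ℤ) = (n : ℤ) := by
        have := Finset.card_add_card_compl Q
        rw [Fintype.card_fin] at this
        exact_mod_cast congrArg (Nat.cast : ℕ → ℤ) this
      push_cast
      ring_nf
      push_cast at hcard ⊢
      nlinarith [hcard]
    omega
  obtain ⟨w, hw⟩ := dw_mono D hbound
  exact ⟨w, by exact_mod_cast hw⟩
end

section
/- Let I = (A,b,d) be an integer linear system with QH-partition (Q,H), let R ⊆ D^n be its set of feasible solutions, and let s, t ∈ R with s ≥_{QH} t. Let e_j denote the j-th unit vector. Suppose w ∈ D^n satisfies: (C0) w ∈ R; (C1) w ≤_{QH} s; (C2) w − e_j ∉ R for every j ∈ H, and for every j ∈ Q with w_j ≠ t_j, w − σ_j e_j ∉ R, where σ_j = 1 if w_j > t_j and σ_j = −1 if w_j < t_j; (C3) there exists j such that either j ∈ H and w_j > t_j, or j ∈ Q and w_j ≠ t_j. Then s and t lie in different connected components of G(R) (they are disconnected). -/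
/-- The median (middle value) of three integers. -/
def med (a b c : ℤ) : ℤ := max (min a b) (max (min b c) (min c a))

/-- `x ≤_{QH} y` relative to the target `t`: on coordinates of `H = Qᶜ` the usual
order, and on coordinates of `Q` the order `x_i ≤_{t_i} y_i`, i.e. `M(t_i,x_i,y_i) = x_i`. -/
def leQH {n : ℕ} (Q : Finset (Fin n)) (t x y : Fin n → ℤ) : Prop :=
  (∀ i, i ∉ Q → x i ≤ y i) ∧ ∀ i ∈ Q, med (t i) (x i) (y i) = x i

private lemma mul_mono_int {a : ℚ} {p q : ℤ}
    (h : (0 ≤ a ∧ p ≤ q) ∨ (a ≤ 0 ∧ q ≤ p)) : a * (p : ℚ) ≤ a * (q : ℚ) := by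
  rcases h with ⟨ha, h⟩ | ⟨ha, h⟩
  · exact mul_le_mul_of_nonneg_left (by exact_mod_cast h) ha
  · exact mul_le_mul_of_nonpos_left (by exact_mod_cast h) ha

private lemma witness_step {m n : ℕ} {A : Matrix (Fin m) (Fin n) ℚ} {b : Fin m → ℚ} {d : ℕ}
    {u : Fin n → ℤ} (hu : Feasible A b d u) (i : Fin m) {z : Fin n → ℤ}
    (h : ∀ l, A i l * (u l : ℚ) ≤ A i l * (z l : ℚ)) :
    b i ≤ ∑ j, A i j * (z j : ℚ) :=
  le_trans (hu.2 i) (Finset.sum_le_sum fun l _ => h l)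

private lemma Hwit {m n : ℕ} {A : Matrix (Fin m) (Fin n) ℚ} {b : Fin m → ℚ} {d : ℕ}
    {Q : Finset (Fin n)} (hQH : QHPartition A Q) {w y : Fin n → ℤ} {j0 : Fin n}
    (hj0 : j0 ∉ Q) (hw : Feasible A b d w) (hy : Feasible A b d y)
    (hH : ∀ l, l ∉ Q → l ≠ j0 → w l ≤ y l) (hyj : y j0 ≤ w j0 - 1) :
    Feasible A b d (Function.update w j0 (w j0 - 1)) := by
  constructor
  · intro l
    rcases eq_or_ne l j0 with rfl | hl
    · rw [Function.update_self]
      have h1 := (hy.1 l).1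
      have h2 := (hw.1 l).2
      omega
    · rw [Function.update_of_ne hl]; exact hw.1 l
  · intro i
    by_cases hA : 0 < A i j0
    · have hQ0 : ∀ q ∈ Q, A i q = 0 :=
        hQH.2.2 i ⟨j0, Finset.mem_compl.mpr hj0, hA⟩
      have hH0 : ∀ l, l ∉ Q → l ≠ j0 → A i l ≤ 0 := by
        intro l hlQ hlj
        by_contra hpos
        push_neg at hpos
        have hsub : ({j0, l} : Finset (Fin n)) ⊆ (Qᶜ).filter (fun j => 0 < A i j) := by
          intro z hz
          simp only [Finset.mem_insert, Finset.mem_singleton] at hz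
          rcases hz with rfl | rfl <;>
            simp [Finset.mem_filter, Finset.mem_compl, hj0, hA, hlQ, hpos]
        have hcard := hQH.2.1 i
        have h2 : ({j0, l} : Finset (Fin n)).card = 2 := Finset.card_pair (Ne.symm hlj)
        have hle := Finset.card_le_card hsub
        omega
      refine witness_step hy i ?_
      intro l
      rcases eq_or_ne l j0 with rfl | hl
      · rw [Function.update_self]; exact mul_mono_int (Or.inl ⟨hA.le, hyj⟩)
      · rw [Function.update_of_ne hl]
        by_cases hlQ : l ∈ Q
        · rw [hQ0 l hlQ]; simp
        · exact mul_mono_int (Or.inr ⟨hH0 l hlQ hl, hH l hlQ hl⟩)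
    · push_neg at hA
      refine witness_step hw i ?_
      intro l
      rcases eq_or_ne l j0 with rfl | hl
      · rw [Function.update_self]; exact mul_mono_int (Or.inr ⟨hA, by omega⟩)
      · rw [Function.update_of_ne hl]

private lemma Qwit {m n : ℕ} {A : Matrix (Fin m) (Fin n) ℚ} {b : Fin m → ℚ} {d : ℕ}
    {Q : Finset (Fin n)} (hQH : QHPartition A Q) {w y t : Fin n → ℤ} {j0 : Fin n} {v : ℤ}
    (hj0 : j0 ∈ Q) (hw : Feasible A b d w) (hy : Feasible A b d y) (ht : Feasible A b d t)
    (hHy : ∀ l, l ∉ Q → w l ≤ y l) (hHt : ∀ l, l ∉ Q → w l ≤ t l)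
    (hmed : ∀ q ∈ Q, q ≠ j0 → min (t q) (y q) ≤ w q ∧ w q ≤ max (t q) (y q))
    (hv : (v = w j0 - 1 ∧ y j0 ≤ v ∧ t j0 ≤ v) ∨ (v = w j0 + 1 ∧ v ≤ y j0 ∧ v ≤ t j0)) :
    Feasible A b d (Function.update w j0 v) := by
  constructor
  · intro l
    rcases eq_or_ne l j0 with rfl | hl
    · rw [Function.update_self]
      have h1 := hy.1 l
      have h2 := hw.1 l
      have h3 := ht.1 l
      rcases hv with ⟨hveq, h4, h5⟩ | ⟨hveq, h4, h5⟩ <;> omega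
    · rw [Function.update_of_ne hl]; exact hw.1 l
  · intro i
    by_cases hgood : A i j0 * ((w j0 : ℤ) : ℚ) ≤ A i j0 * (v : ℚ)
    · refine witness_step hw i ?_
      intro l
      rcases eq_or_ne l j0 with rfl | hl
      · rw [Function.update_self]; exact hgood
      · rw [Function.update_of_ne hl]
    · push_neg at hgood
      have hAne : A i j0 ≠ 0 := by
        intro h; rw [h] at hgood; simp at hgood
      have hnopos : ∀ l, l ∉ Q → A i l ≤ 0 := by
        intro l hlQ
        by_contra hpos
        push_neg at hpos
        exact hAne (hQH.2.2 i ⟨l, Finset.mem_compl.mpr hlQ, hpos⟩ j0 hj0)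
      have hj0A : A i j0 * ((y j0 : ℤ) : ℚ) ≤ A i j0 * (v : ℚ) ∧
          A i j0 * ((t j0 : ℤ) : ℚ) ≤ A i j0 * (v : ℚ) := by
        rcases hv with ⟨hveq, h4, h5⟩ | ⟨hveq, h4, h5⟩
        · have hApos : 0 < A i j0 := by
            rcases lt_trichotomy (A i j0) 0 with h | h | h
            · exfalso
              have hc : ((v : ℤ) : ℚ) < ((w j0 : ℤ) : ℚ) := by exact_mod_cast (by omega : v < w j0)
              nlinarith
            · exact absurd h hAne
            · exact h
          exact ⟨mul_mono_int (Or.inl ⟨hApos.le, h4⟩), mul_mono_int (Or.inl ⟨hApos.le, h5⟩)⟩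
        · have hAneg : A i j0 < 0 := by
            rcases lt_trichotomy (A i j0) 0 with h | h | h
            · exact h
            · exact absurd h hAne
            · exfalso
              have hc : ((w j0 : ℤ) : ℚ) < ((v : ℤ) : ℚ) := by exact_mod_cast (by omega : w j0 < v)
              nlinarith
          exact ⟨mul_mono_int (Or.inr ⟨hAneg.le, h4⟩), mul_mono_int (Or.inr ⟨hAneg.le, h5⟩)⟩
      obtain ⟨u, hu, hj0u, hQu, hHu⟩ :
          ∃ u, Feasible A b d u ∧ A i j0 * ((u j0 : ℤ) : ℚ) ≤ A i j0 * (v : ℚ) ∧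
            (∀ q, q ∈ Q → q ≠ j0 → A i q * ((u q : ℤ) : ℚ) ≤ A i q * ((w q : ℤ) : ℚ)) ∧
            (∀ l, l ∉ Q → A i l * ((u l : ℤ) : ℚ) ≤ A i l * ((w l : ℤ) : ℚ)) := by
        by_cases hone : ∀ q ∈ Q, q ≠ j0 → A i q = 0
        · exact ⟨y, hy, hj0A.1, fun q hq hne => by rw [hone q hq hne]; simp,
            fun l hl => mul_mono_int (Or.inr ⟨hnopos l hl, hHy l hl⟩)⟩
        · push_neg at hone
          obtain ⟨j1, hj1Q, hj1ne, hj1nz⟩ := hone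
          have huniq : ∀ q, q ∈ Q → q ≠ j0 → q ≠ j1 → A i q = 0 := by
            intro q hq hq0 hq1
            by_contra hnz
            have hsub : ({j0, j1, q} : Finset (Fin n)) ⊆ Q.filter (fun j => A i j ≠ 0) := by
              intro z hz
              simp only [Finset.mem_insert, Finset.mem_singleton] at hz
              rcases hz with rfl | rfl | rfl <;> simp [Finset.mem_filter, *]
            have hc3 : ({j0, j1, q} : Finset (Fin n)).card = 3 := by
              rw [Finset.card_insert_of_notMem (by simp [Ne.symm hj1ne, Ne.symm hq0]),
                Finset.card_pair (Ne.symm hq1)]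
            have hle := Finset.card_le_card hsub
            have hcard := hQH.1 i
            omega
          rcases le_or_gt (A i j1 * ((y j1 : ℤ) : ℚ)) (A i j1 * ((w j1 : ℤ) : ℚ)) with hch | hch
          · refine ⟨y, hy, hj0A.1, ?_, fun l hl => mul_mono_int (Or.inr ⟨hnopos l hl, hHy l hl⟩)⟩
            intro q hq hne
            rcases eq_or_ne q j1 with rfl | hq1
            · exact hch
            · rw [huniq q hq hne hq1]; simp
          · have hb := hmed j1 hj1Q hj1ne
            have hty : A i j1 * ((t j1 : ℤ) : ℚ) ≤ A i j1 * ((w j1 : ℤ) : ℚ) := by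
              rcases le_or_gt 0 (A i j1) with h1 | h1
              · have hwy : ((w j1 : ℤ) : ℚ) < ((y j1 : ℤ) : ℚ) := lt_of_mul_lt_mul_left hch h1
                have hwy' : w j1 < y j1 := by exact_mod_cast hwy
                exact mul_mono_int (Or.inl ⟨h1, by omega⟩)
              · have hyw : ((y j1 : ℤ) : ℚ) < ((w j1 : ℤ) : ℚ) := by nlinarith
                have hyw' : y j1 < w j1 := by exact_mod_cast hyw
                exact mul_mono_int (Or.inr ⟨h1.le, by omega⟩)
            refine ⟨t, ht, hj0A.2, ?_, fun l hl => mul_mono_int (Or.inr ⟨hnopos l hl, hHt l hl⟩)⟩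
            intro q hq hne
            rcases eq_or_ne q j1 with rfl | hq1
            · exact hty
            · rw [huniq q hq hne hq1]; simp
      refine witness_step hu i ?_
      intro l
      rcases eq_or_ne l j0 with rfl | hl
      · rw [Function.update_self]; exact hj0u
      · rw [Function.update_of_ne hl]
        by_cases hlQ : l ∈ Q
        · exact hQu l hlQ hl
        · exact hHu l hlQ

private lemma crossing {V : Type*} {G : SimpleGraph V} (P : V → Prop) :
    ∀ {a c : V}, G.Walk a c → P a → ¬ P c → ∃ x y, G.Adj x y ∧ P x ∧ ¬ P y := by
  intro a c p
  induction p with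
  | nil => intro h1 h2; exact absurd h1 h2
  | @cons u v' c' h q ih =>
    intro h1 h2
    by_cases hv : P v'
    · exact ih hv h2
    · exact ⟨u, v', h, h1, hv⟩
theorem stmt_13 {m n : ℕ} (A : Matrix (Fin m) (Fin n) ℚ) (b : Fin m → ℚ) (d : ℕ)
    (hd : 0 < d)
    (Q : Finset (Fin n)) (hQH : QHPartition A Q)
    (s t : Fin n → ℤ) (hs : Feasible A b d s) (ht : Feasible A b d t)
    (hst : leQH Q t t s)  -- `s ≥_{QH} t`
    (w : Fin n → ℤ)
    -- (C0): `w` is feasible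
    (hC0 : Feasible A b d w)
    -- (C1): `w ≤_{QH} s`
    (hC1 : leQH Q t w s)
    -- (C2): `w` is locally QH-minimal
    (hC2H : ∀ j, j ∉ Q → ¬ Feasible A b d (Function.update w j (w j - 1)))
    (hC2Q : ∀ j ∈ Q, w j ≠ t j →
      ¬ Feasible A b d (Function.update w j (w j - (if t j < w j then 1 else -1))))
    -- (C3): some coordinate of `w` is strictly above `t`
    (hC3 : ∃ j, (j ∉ Q ∧ t j < w j) ∨ (j ∈ Q ∧ w j ≠ t j)) :
    ¬ (solGraph A b d).Reachable s t := by
  intro hreach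
  obtain ⟨p⟩ := hreach
  classical
  by_cases hCase : ∀ l, l ∉ Q → w l ≤ t l
  · -- CASE 1 : `w ≤ t` on all of `H`
    have hPs : (∀ l, l ∉ Q → w l ≤ s l) ∧ (∀ l ∈ Q, med (t l) (w l) (s l) = w l) := hC1
    have hPt : ¬ ((∀ l, l ∉ Q → w l ≤ t l) ∧ (∀ l ∈ Q, med (t l) (w l) (t l) = w l)) := by
      obtain ⟨j, hj⟩ := hC3
      rcases hj with ⟨hjH, hjlt⟩ | ⟨hjQ, hjne⟩
      · exact absurd (hCase j hjH) (by omega)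
      · intro hP
        have hm := hP.2 j hjQ
        unfold med at hm
        omega
    obtain ⟨x, y, hadj, hPx, hPy⟩ :=
      crossing (G := solGraph A b d)
        (fun z => (∀ l, l ∉ Q → w l ≤ z l) ∧ (∀ l ∈ Q, med (t l) (w l) (z l) = w l))
        p hPs hPt
    obtain ⟨hfx, hfy, hham⟩ := hadj
    unfold hammingDist at hham
    obtain ⟨j0, hset⟩ := Finset.card_eq_one.mp hham
    have hmem : ∀ l, (x l ≠ y l) ↔ l = j0 := by
      intro l
      rw [← Finset.mem_singleton, ← hset]
      simp
    have heq : ∀ l, l ≠ j0 → y l = x l := by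
      intro l hl
      by_contra hne
      exact hl ((hmem l).mp fun he => hne he.symm)
    by_cases hfail : ∃ l, l ∉ Q ∧ y l < w l
    · obtain ⟨l, hlQ, hlt⟩ := hfail
      have hlj : l = j0 := by
        by_contra hne
        rw [heq l hne] at hlt
        exact absurd (hPx.1 l hlQ) (by omega)
      obtain rfl := hlj
      exact hC2H l hlQ (Hwit hQH hlQ hC0 hfy
        (fun l' h1 h2 => by rw [heq l' h2]; exact hPx.1 l' h1) (by omega))
    · push_neg at hfail
      have hfail2 : ∃ l ∈ Q, med (t l) (w l) (y l) ≠ w l := by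
        by_contra h
        push_neg at h
        exact hPy ⟨hfail, h⟩
      obtain ⟨j, hjQ, hjne⟩ := hfail2
      have hlj : j = j0 := by
        by_contra hne
        rw [heq j hne] at hjne
        exact hjne (hPx.2 j hjQ)
      obtain rfl := hlj
      have hmedfact : ∀ q ∈ Q, q ≠ j → min (t q) (y q) ≤ w q ∧ w q ≤ max (t q) (y q) := by
        intro q hq hne
        have hm := hPx.2 q hq
        rw [heq q hne]
        unfold med at hm
        omega
      have hy0l := (hfy.1 j).1
      have hy0u := (hfy.1 j).2
      rcases lt_trichotomy (t j) (w j) with hlt | heqt | hgt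
      · have hy0 : y j ≤ w j - 1 := by
          by_contra h
          apply hjne
          unfold med
          omega
        refine absurd ?_ (hC2Q j hjQ (by omega))
        rw [if_pos hlt]
        exact Qwit hQH hjQ hC0 hfy ht hfail hCase hmedfact (Or.inl ⟨rfl, by omega, by omega⟩)
      · apply hjne
        unfold med
        omega
      · have hy0 : w j + 1 ≤ y j := by
          by_contra h
          apply hjne
          unfold med
          omega
        refine absurd ?_ (hC2Q j hjQ (by omega))
        rw [if_neg (by omega)]
        have hvv : w j - (-1 : ℤ) = w j + 1 := by ring
        rw [hvv]
        exact Qwit hQH hjQ hC0 hfy ht hfail hCase hmedfact (Or.inr ⟨rfl, by omega, by omega⟩)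
  · -- CASE 2 : some `h0 ∈ H` has `t h0 < w h0`
    push_neg at hCase
    obtain ⟨h0, hh0Q, hh0lt⟩ := hCase
    obtain ⟨x, y, hadj, hPx, hPy⟩ :=
      crossing (G := solGraph A b d) (fun z => ∀ l, l ∉ Q → w l ≤ z l) p hC1.1
        (fun h => absurd (h h0 hh0Q) (by omega))
    obtain ⟨hfx, hfy, hham⟩ := hadj
    unfold hammingDist at hham
    obtain ⟨j0, hset⟩ := Finset.card_eq_one.mp hham
    have hmem : ∀ l, (x l ≠ y l) ↔ l = j0 := by
      intro l
      rw [← Finset.mem_singleton, ← hset]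
      simp
    have heq : ∀ l, l ≠ j0 → y l = x l := by
      intro l hl
      by_contra hne
      exact hl ((hmem l).mp fun he => hne he.symm)
    push_neg at hPy
    obtain ⟨l, hlQ, hlt⟩ := hPy
    have hlj : l = j0 := by
      by_contra hne
      rw [heq l hne] at hlt
      exact absurd (hPx l hlQ) (by omega)
    obtain rfl := hlj
    exact hC2H l hlQ (Hwit hQH hlQ hC0 hfy
      (fun l' h1 h2 => by rw [heq l' h2]; exact hPx l' h1) (by omega))
end

section
/- Let A ∈ ℚ^{m×n} be a matrix that admits the elimination ordering (1,2,…,n), i.e., for each k = 1,…,n, in the submatrix of A consisting of columns {k, k+1, …, n}, column k satisfies condition (i) or condition (ii). Let A' be obtained from A by replacing the j-th column with its negation for every j eliminated by condition (ii). Then A' satisfies property (P1): for every row i and column j, A'_{ij} > 0 implies A'_{ij'} ≤ 0 for all j' < j and A'_{ij'} = 0 for all j' > j. -/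
/-- Column `k` satisfies condition (i) with respect to the remaining columns
`{k, k+1, …, n}`: a positive entry in column `k` forces all later entries of
its row to be zero. -/
def CondI {m n : ℕ} (A : Matrix (Fin m) (Fin n) ℚ) (k : Fin n) : Prop :=
  ∀ i, 0 < A i k → ∀ j, k < j → A i j = 0

/-- Column `k` satisfies condition (ii) with respect to the remaining columns
`{k, k+1, …, n}`: a negative entry in column `k` forces all later entries of
its row to be zero. -/
def CondII {m n : ℕ} (A : Matrix (Fin m) (Fin n) ℚ) (k : Fin n) : Prop :=
  ∀ i, A i k < 0 → ∀ j, k < j → A i j = 0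

theorem stmt_16 {m n : ℕ} (A : Matrix (Fin m) (Fin n) ℚ)
    (N : Finset (Fin n))  -- the columns eliminated by condition (ii)
    (helim : ∀ k : Fin n, (k ∈ N ∧ CondII A k) ∨ (k ∉ N ∧ CondI A k))
    (A' : Matrix (Fin m) (Fin n) ℚ)
    (hA' : ∀ i j, A' i j = if j ∈ N then -A i j else A i j) :
    -- property (P1)
    ∀ i j, 0 < A' i j →
      (∀ j', j' < j → A' i j' ≤ 0) ∧ (∀ j', j < j' → A' i j' = 0) := by
  intro i j hpos
  -- key: for any column k with A' i k > 0, all later columns of A vanish in row i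
  have key : ∀ k : Fin n, 0 < A' i k → ∀ j', k < j' → A i j' = 0 := by
    intro k hk j' hlt
    rw [hA'] at hk
    rcases helim k with ⟨hmem, hII⟩ | ⟨hmem, hI⟩
    · rw [if_pos hmem] at hk
      exact hII i (by linarith) j' hlt
    · rw [if_neg hmem] at hk
      exact hI i hk j' hlt
  have hzero : ∀ j', j < j' → A' i j' = 0 := by
    intro j' hlt
    have := key j hpos j' hlt
    rw [hA']
    split <;> simp [this]
  refine ⟨?_, hzero⟩
  intro j' hlt
  by_contra h
  push_neg at h
  have := key j' h j hlt
  rw [hA'] at hpos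
  revert hpos
  split <;> simp [this]
end

section
/- Let I = (A,b,d) be an integer linear system whose matrix A ∈ ℚ^{m×n} satisfies property (P1): for every row i and column j, A_{ij} > 0 implies A_{ij'} ≤ 0 for all j' < j and A_{ij'} = 0 for all j' > j. Suppose I has at least one feasible solution, and let x* be its unique minimal solution (which exists since A is Horn). Then for every feasible solution s and every k = 0,…,n, the hybrid vector s^k = (x*_1, …, x*_k, s_{k+1}, …, s_n) is feasible; consequently s is connected to x* in G(I) by a path of length at most n, and G(I) is connected with diameter at most 2n. -/
lemma hybrid_feasible {m n : ℕ} (A : Matrix (Fin m) (Fin n) ℚ) (b : Fin m → ℚ) (d : ℕ)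
    (hP1 : ∀ i j, 0 < A i j →
      (∀ j', j' < j → A i j' ≤ 0) ∧ (∀ j', j < j' → A i j' = 0))
    (xstar : Fin n → ℤ)
    (hxstar : Feasible A b d xstar)
    (hmin : ∀ x, Feasible A b d x → ∀ j, xstar j ≤ x j)
    (s : Fin n → ℤ) (hs : Feasible A b d s) (k : ℕ) :
    Feasible A b d (fun j => if (j : ℕ) < k then xstar j else s j) := by
  constructor
  · intro j
    by_cases hjk : (j : ℕ) < k
    · simpa [hjk] using hxstar.1 j
    · simpa [hjk] using hs.1 j
  · intro i
    by_cases hc : ∃ j0 : Fin n, 0 < A i j0 ∧ (j0 : ℕ) < k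
    · obtain ⟨j0, hj0pos, hj0k⟩ := hc
      have heq : ∑ j, A i j * (((if (j : ℕ) < k then xstar j else s j) : ℤ) : ℚ)
          = ∑ j, A i j * (xstar j : ℚ) := by
        refine Finset.sum_congr rfl fun j _ => ?_
        by_cases hjk : (j : ℕ) < k
        · simp [hjk]
        · have hA : A i j = 0 := (hP1 i j0 hj0pos).2 j (by
            rw [Fin.lt_def]; omega)
          simp [hA]
      show b i ≤ ∑ j, A i j * (((if (j : ℕ) < k then xstar j else s j) : ℤ) : ℚ)
      rw [heq]; exact hxstar.2 i
    · push_neg at hc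
      calc b i ≤ ∑ j, A i j * (s j : ℚ) := hs.2 i
        _ ≤ ∑ j, A i j * (((if (j : ℕ) < k then xstar j else s j) : ℤ) : ℚ) := by
          refine Finset.sum_le_sum fun j _ => ?_
          by_cases hjk : (j : ℕ) < k
          · simp only [hjk, if_true]
            have hA : A i j ≤ 0 := by
              by_contra hA
              exact absurd (hc j (lt_of_not_ge hA)) (by omega)
            have hxs : (xstar j : ℚ) ≤ (s j : ℚ) := by
              exact_mod_cast hmin s hs j
            exact mul_le_mul_of_nonpos_left hxs hA
          · simp [hjk]

theorem stmt_17 {m n : ℕ} (A : Matrix (Fin m) (Fin n) ℚ) (b : Fin m → ℚ) (d : ℕ)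
    (hd : 0 < d)
    -- property (P1)
    (hP1 : ∀ i j, 0 < A i j →
      (∀ j', j' < j → A i j' ≤ 0) ∧ (∀ j', j < j' → A i j' = 0))
    (xstar : Fin n → ℤ)
    (hxstar : Feasible A b d xstar)
    (hmin : ∀ x, Feasible A b d x → ∀ j, xstar j ≤ x j) :
    -- every hybrid vector `s^k` is feasible
    (∀ s, Feasible A b d s → ∀ k ≤ n,
      Feasible A b d (fun j => if (j : ℕ) < k then xstar j else s j)) ∧
    -- every feasible `s` is joined to `x*` by a path of length at most `n`
    (∀ s, Feasible A b d s →
      ∃ p : (solGraph A b d).Walk s xstar, p.length ≤ n) ∧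
    -- `G(I)` is connected on feasible solutions, with diameter at most `2n`
    (∀ s t, Feasible A b d s → Feasible A b d t →
      ∃ p : (solGraph A b d).Walk s t, p.length ≤ 2 * n) := by
  have hfeas : ∀ s, Feasible A b d s → ∀ k, k ≤ n →
      Feasible A b d (fun j => if (j : ℕ) < k then xstar j else s j) :=
    fun s hs k _ => hybrid_feasible A b d hP1 xstar hxstar hmin s hs k
  have hwalk : ∀ s, Feasible A b d s →
      ∃ p : (solGraph A b d).Walk s xstar, p.length ≤ n := by
    intro s hs
    -- walk from s = s^0 to s^k of length ≤ k, by induction on k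
    have key : ∀ k, k ≤ n →
        ∃ p : (solGraph A b d).Walk s (fun j => if (j : ℕ) < k then xstar j else s j),
          p.length ≤ k := by
      intro k
      induction k with
      | zero =>
        intro _
        have h0 : (fun j : Fin n => if (j : ℕ) < 0 then xstar j else s j) = s := by
          funext j; simp
        exact ⟨(SimpleGraph.Walk.nil).copy rfl h0.symm, by simp⟩
      | succ k ih =>
        intro hk1
        obtain ⟨p, hp⟩ := ih (by omega)
        have hkn : k < n := hk1
        by_cases hsk : s ⟨k, hkn⟩ = xstar ⟨k, hkn⟩
        · have heq : (fun j : Fin n => if (j : ℕ) < k then xstar j else s j)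
              = fun j : Fin n => if (j : ℕ) < k + 1 then xstar j else s j := by
            funext j
            by_cases h1 : (j : ℕ) < k
            · simp [h1, Nat.lt_succ_of_lt h1]
            · by_cases h2 : (j : ℕ) = k
              · have hj : j = ⟨k, hkn⟩ := Fin.ext h2
                subst hj
                simp [hsk]
              · have h3 : ¬ (j : ℕ) < k + 1 := by omega
                simp [h1, h3]
          exact ⟨p.copy rfl heq, by simp; omega⟩
        · have hadj : (solGraph A b d).Adj
              (fun j : Fin n => if (j : ℕ) < k then xstar j else s j)
              (fun j : Fin n => if (j : ℕ) < k + 1 then xstar j else s j) := by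
            refine ⟨hfeas s hs k (by omega), hfeas s hs (k+1) hk1, ?_⟩
            have hset : ({j | (fun j : Fin n => if (j : ℕ) < k then xstar j else s j) j ≠
                (fun j : Fin n => if (j : ℕ) < k + 1 then xstar j else s j) j} : Finset (Fin n))
                = {⟨k, hkn⟩} := by
              ext j
              simp only [Finset.mem_filter, Finset.mem_univ, true_and, Finset.mem_singleton]
              constructor
              · intro hne
                by_contra hj
                have h2 : (j : ℕ) ≠ k := fun h => hj (Fin.ext h)
                by_cases h1 : (j : ℕ) < k
                · simp [h1, Nat.lt_succ_of_lt h1] at hne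
                · have h3 : ¬ (j : ℕ) < k + 1 := by omega
                  simp [h1, h3] at hne
              · intro hj
                subst hj
                simp only [lt_irrefl, if_false, Nat.lt_succ_self, if_true]
                exact hsk
            rw [hammingDist, hset, Finset.card_singleton]
          exact ⟨p.concat hadj, by
            rw [SimpleGraph.Walk.length_concat]; omega⟩
    obtain ⟨p, hp⟩ := key n le_rfl
    have hn : (fun j : Fin n => if (j : ℕ) < n then xstar j else s j) = xstar := by
      funext j; simp [j.isLt]
    exact ⟨p.copy rfl hn, by simp; omega⟩
  refine ⟨hfeas, hwalk, ?_⟩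
  intro s t hs ht
  obtain ⟨p, hp⟩ := hwalk s hs
  obtain ⟨q, hq⟩ := hwalk t ht
  exact ⟨p.append q.reverse, by
    rw [SimpleGraph.Walk.length_append, SimpleGraph.Walk.length_reverse]; omega⟩
end
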